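/- arXiv:0902.2601 — 8 statements merged into one kernel-verified Lean document; each statement's English description precedes it below -/
import Mathlib

section
/- Let ĉ : ℝ → [0,1] be an even C^∞ function with ĉ(t)=1 for |t| ≤ 1 and ĉ(t)=0 for |t| ≥ 2. For t ∈ ℝ^d \ {0} define N(t) := ∑_{m=1}^d |t_m| ∏_{j=1}^d ĉ(t_j/t_m) (with ĉ(τ/0) := 0), and N(0) := 0. Then ‖t‖_∞ ≤ N(t) ≤ ‖t‖_1 for all t ∈ ℝ^d. -/
open Set Finset

/-- For an even smooth cutoff `ĉ : ℝ → [0,1]` with `ĉ = 1` on `[-1,1]` and `ĉ = 0` outside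
`[-2,2]`, the quasi-norm `N(t) := ∑_m |t_m| ∏_j ĉ(t_j/t_m)` (with `ĉ(τ/0) := 0`)
satisfies `‖t‖_∞ ≤ N(t) ≤ ‖t‖_1`. -/
theorem stmt3 (d : ℕ) (c : ℝ → ℝ)
    (hceven : ∀ t : ℝ, c (-t) = c t)
    (hcsmooth : ContDiff ℝ (⊤ : ℕ∞) c)
    (hcrange : ∀ t : ℝ, 0 ≤ c t ∧ c t ≤ 1)
    (hc1 : ∀ t : ℝ, |t| ≤ 1 → c t = 1)
    (hc0 : ∀ t : ℝ, 2 ≤ |t| → c t = 0)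
    (N : (Fin d → ℝ) → ℝ)
    (hN : ∀ t : Fin d → ℝ, N t =
      ∑ m : Fin d, |t m| * ∏ j : Fin d, (if t m = 0 then 0 else c (t j / t m))) :
    ∀ t : Fin d → ℝ, ‖t‖ ≤ N t ∧ N t ≤ ∑ i : Fin d, |t i| := by
  intro t
  -- every term is nonneg
  have hterm_nonneg : ∀ m : Fin d,
      0 ≤ |t m| * ∏ j : Fin d, (if t m = 0 then 0 else c (t j / t m)) := by
    intro m
    apply mul_nonneg (abs_nonneg _)
    exact Finset.prod_nonneg fun j _ => by split <;> simp [(hcrange _).1]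
  have hprod_le_one : ∀ m : Fin d,
      (∏ j : Fin d, (if t m = 0 then 0 else c (t j / t m))) ≤ 1 := by
    intro m
    apply Finset.prod_le_one
    · intro j _; split <;> simp [(hcrange _).1]
    · intro j _; split
      · norm_num
      · exact (hcrange _).2
  constructor
  · -- lower bound
    by_cases hd : d = 0
    · subst hd
      simp [hN t, Finset.sum_empty]
      have : t = 0 := funext fun i => i.elim0
      simp [this]
    · have : Nonempty (Fin d) := ⟨⟨0, Nat.pos_of_ne_zero hd⟩⟩
      obtain ⟨m₀, -, hm₀⟩ := Finset.exists_max_image (Finset.univ : Finset (Fin d))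
        (fun m => |t m|) ⟨Classical.arbitrary _, Finset.mem_univ _⟩
      have hmax : ∀ j, |t j| ≤ |t m₀| := fun j => hm₀ j (Finset.mem_univ j)
      have hnorm : ‖t‖ ≤ |t m₀| := by
        rw [pi_norm_le_iff_of_nonneg (abs_nonneg _)]
        intro i; simpa [Real.norm_eq_abs] using hmax i
      by_cases h0 : t m₀ = 0
      · have ht0 : t = 0 := by
          funext i
          have := hmax i
          rw [h0] at this
          simpa using abs_nonpos_iff.mp (by simpa using this)
        rw [ht0]
        simp [hN, norm_zero]
      · have hprod : (∏ j : Fin d, (if t m₀ = 0 then 0 else c (t j / t m₀))) = 1 := by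
          apply Finset.prod_eq_one
          intro j _
          rw [if_neg h0]
          apply hc1
          rw [abs_div]
          exact div_le_one_of_le₀ (hmax j) (abs_nonneg _)
        have hterm : |t m₀| * ∏ j : Fin d, (if t m₀ = 0 then 0 else c (t j / t m₀)) = |t m₀| := by
          rw [hprod, mul_one]
        calc ‖t‖ ≤ |t m₀| := hnorm
          _ = _ := hterm.symm
          _ ≤ N t := by
            rw [hN t]
            exact Finset.single_le_sum (fun m _ => hterm_nonneg m) (Finset.mem_univ m₀)
  · rw [hN t]
    apply Finset.sum_le_sum
    intro m _
    calc |t m| * ∏ j : Fin d, (if t m = 0 then 0 else c (t j / t m))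
        ≤ |t m| * 1 := mul_le_mul_of_nonneg_left (hprod_le_one m) (abs_nonneg _)
      _ = |t m| := mul_one _
end

section
/- Let N(t) := ∑_{m=1}^d |t_m| ∏_{j=1}^d ĉ(t_j/t_m) with ĉ as above. If t ∈ ℝ^d and |t_m| ≤ (1/2)‖t‖_∞ for some index m, then N(t) = N(proj_m t), where proj_m t is t with its m-th coordinate replaced by 0. -/
open Set Finset

/-- If `|t_m| ≤ (1/2)‖t‖_∞` then `N(t) = N(proj_m t)`, where
`N(t) := ∑_m |t_m| ∏_j ĉ(t_j/t_m)` (with `ĉ(τ/0) := 0`) and `proj_m` zeroes out the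
`m`-th coordinate. -/
theorem stmt5 (d : ℕ) (c : ℝ → ℝ)
    (hceven : ∀ t : ℝ, c (-t) = c t)
    (hcsmooth : ContDiff ℝ (⊤ : ℕ∞) c)
    (hcrange : ∀ t : ℝ, 0 ≤ c t ∧ c t ≤ 1)
    (hc1 : ∀ t : ℝ, |t| ≤ 1 → c t = 1)
    (hc0 : ∀ t : ℝ, 2 ≤ |t| → c t = 0)
    (N : (Fin d → ℝ) → ℝ)
    (hN : ∀ t : Fin d → ℝ, N t =
      ∑ m : Fin d, |t m| * ∏ j : Fin d, (if t m = 0 then 0 else c (t j / t m))) :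
    ∀ (t : Fin d → ℝ) (m : Fin d), |t m| ≤ (1/2) * ‖t‖ →
      N t = N (Function.update t m 0) := by
  intro t m hm
  rcases eq_or_ne (t m) 0 with h0 | h0
  · have : Function.update t m 0 = t := by
      funext j
      rcases eq_or_ne j m with rfl | hj
      · simp [h0]
      · simp [Function.update_of_ne hj]
    rw [this]
  · have htm : 0 < |t m| := abs_pos.mpr h0
    haveI : Nonempty (Fin d) := ⟨m⟩
    obtain ⟨i, hi⟩ : ∃ i, ∀ j, |t j| ≤ |t i| := Finite.exists_max _
    have hnorm : ‖t‖ ≤ |t i| := by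
      apply (pi_norm_le_iff_of_nonneg (abs_nonneg _)).mpr
      intro j; simpa [Real.norm_eq_abs] using hi j
    have h2 : 2 * |t m| ≤ |t i| := by nlinarith
    have him : i ≠ m := by
      intro h; rw [h] at h2; nlinarith
    rw [hN, hN]
    apply Finset.sum_congr rfl
    intro k _
    rcases eq_or_ne k m with rfl | hk
    · -- term m vanishes on both sides
      have hzero : c (t i / t k) = 0 := by
        apply hc0
        rw [abs_div, le_div_iff₀ htm]
        linarith
      have : (∏ j : Fin d, (if t k = 0 then 0 else c (t j / t k))) = 0 := by
        apply Finset.prod_eq_zero (Finset.mem_univ i)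
        simp [h0, hzero]
      rw [this]
      simp
    · have htk' : Function.update t m 0 k = t k := Function.update_of_ne hk 0 t
      rcases eq_or_ne (t k) 0 with hk0 | hk0
      · simp [htk', hk0]
      · rcases le_or_gt |t m| |t k| with hle | hlt
        · -- the two products are equal factor by factor
          rw [htk']
          congr 1
          apply Finset.prod_congr rfl
          intro j _
          rcases eq_or_ne j m with rfl | hj
          · rw [Function.update_self]
            have h1 : c (t j / t k) = 1 := by
              apply hc1
              rw [abs_div, div_le_one (abs_pos.mpr hk0)]
              exact hle
            have h2' : c ((0:ℝ) / t k) = 1 := by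
              apply hc1; simp
            simp only [zero_div] at h2'
            simp [hk0, h1, h2']
          · rw [Function.update_of_ne hj]
        · -- both products vanish at factor i
          have habs : 2 ≤ |t i / t k| := by
            rw [abs_div, le_div_iff₀ (abs_pos.mpr hk0)]
            linarith
          have hzero : c (t i / t k) = 0 := hc0 _ habs
          have hL : (∏ j : Fin d, (if t k = 0 then 0 else c (t j / t k))) = 0 :=
            Finset.prod_eq_zero (Finset.mem_univ i) (by simp [hk0, hzero])
          have hR : (∏ j : Fin d,
              (if Function.update t m 0 k = 0 then 0
                else c (Function.update t m 0 j / Function.update t m 0 k))) = 0 := by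
            apply Finset.prod_eq_zero (Finset.mem_univ i)
            rw [htk', Function.update_of_ne him]
            simp [hk0, hzero]
          rw [hL, hR, mul_zero, mul_zero]
end

section
/- Let F : [1,∞) → (0,∞) be positive and nondecreasing with v ln F(v) convex on [1,∞). Suppose f ∈ C^∞[a₁,b₁] satisfies (1/k!)‖f^{(k)}‖_∞ ≤ γ₁(γ̃₁ F(k))^k for all k ≥ 1, g ∈ C^∞[a₂,b₂] satisfies (1/k!)‖g^{(k)}‖_∞ ≤ γ₂(γ̃₂ F(k))^k for all k ≥ 1, and f maps [a₁,b₁] into [a₂,b₂]. Then for all k ≥ 1, (1/k!)‖(g∘f)^{(k)}‖_∞ ≤ γ₂ [γ̃₁(γ₁γ̃₂F(1)+1) F(k)]^k. -/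
open Real Set Finset


lemma nat_hockey (i n : ℕ) : ∑ t ∈ Finset.range n, (t.choose i) = n.choose (i+1) := by
  induction n with
  | zero => simp
  | succ n IH =>
    rw [Finset.sum_range_succ, IH, Nat.choose_succ_succ']
    omega

lemma nat_weighted (i n : ℕ) :
    ∑ t ∈ Finset.range n, (n - t) * t.choose i = (n+1).choose (i+2) := by
  induction n with
  | zero => simp [Nat.choose_eq_zero_of_lt]
  | succ n IH =>
    have h1 : ∑ t ∈ Finset.range (n+1), (n + 1 - t) * t.choose i
        = (∑ t ∈ Finset.range n, (n - t) * t.choose i)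
          + ∑ t ∈ Finset.range (n+1), t.choose i := by
      rw [Finset.sum_range_succ (f := fun t => (n + 1 - t) * t.choose i),
        Finset.sum_range_succ (f := fun t => t.choose i)]
      have h2 : ∑ t ∈ Finset.range n, (n + 1 - t) * t.choose i
          = ∑ t ∈ Finset.range n, ((n - t) * t.choose i + t.choose i) := by
        apply Finset.sum_congr rfl
        intro t ht
        have ht' : t < n := Finset.mem_range.1 ht
        have h3 : n + 1 - t = (n - t) + 1 := by omega
        rw [h3, add_mul, one_mul]
      rw [h2, Finset.sum_add_distrib]
      have h4 : n + 1 - n = 1 := by omega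
      rw [h4, one_mul]
      ring
    rw [h1, IH, nat_hockey]
    have h5 : (n+1+1).choose (i+2) = (n+1).choose (i+1) + (n+1).choose (i+2) := Nat.choose_succ_succ' (n+1) (i+1)
    omega

lemma desc_succ_fac (m : ℕ) : (m+1).descFactorial m = (m+1).factorial := by
  induction m with
  | zero => simp
  | succ m IH =>
    rw [Nat.succ_descFactorial_succ, IH]
    rw [Nat.factorial_succ (m+1), Nat.factorial_succ m]

noncomputable def CF (A : ℝ) (m k : ℕ) : ℝ :=
  if k = 0 then (m.factorial : ℝ)
  else ∑ j ∈ Finset.range k, ((k-1).choose j * (m+j+1).descFactorial m : ℕ) * A^(j+1)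

lemma CF_zero (A : ℝ) (m : ℕ) : CF A m 0 = (m.factorial : ℝ) := by simp [CF]

lemma CF_succ (A : ℝ) (m k : ℕ) :
    CF A m (k+1) = ∑ j ∈ Finset.range (k+1),
      (k.choose j * (m+j+1).descFactorial m : ℕ) * A^(j+1) := by
  simp [CF]

lemma CF_pos {A : ℝ} (hA : 0 < A) (m k : ℕ) : 0 < CF A m k := by
  cases k with
  | zero => rw [CF_zero]; positivity
  | succ k =>
    rw [CF_succ]
    apply Finset.sum_pos'
    · intro j hj; positivity
    · refine ⟨0, Finset.mem_range.2 (Nat.succ_pos k), ?_⟩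
      have h1 : 0 < k.choose 0 * (m+0+1).descFactorial m := by
        rw [Nat.choose_zero_right, one_mul]
        refine Nat.pos_of_ne_zero (fun h => ?_)
        have := Nat.descFactorial_eq_zero_iff_lt.1 h
        omega
      positivity

lemma CF_rec (A : ℝ) (m k : ℕ) :
    A * ∑ j ∈ Finset.range (k+1), ((k+1-j : ℕ) : ℝ) * CF A (m+1) j
      = (k+1) * CF A m (k+1) := by
  have hL : ∑ j ∈ Finset.range (k+1), ((k+1-j : ℕ) : ℝ) * CF A (m+1) j
      = (∑ j ∈ Finset.range k, ((k-j : ℕ) : ℝ) * CF A (m+1) (j+1))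
        + ((k+1 : ℕ) : ℝ) * ((m+1).factorial : ℝ) := by
    rw [Finset.sum_range_succ' (f := fun j => ((k+1-j : ℕ) : ℝ) * CF A (m+1) j)]
    rw [CF_zero]
    simp only [Nat.sub_zero]
    congr 1
    apply Finset.sum_congr rfl
    intro j hj
    congr 2
    omega
  have hB : ∀ j ∈ Finset.range k, CF A (m+1) (j+1)
      = ∑ i ∈ Finset.range k, (j.choose i * (m+1+i+1).descFactorial (m+1) : ℕ) * A^(i+1) := by
    intro j hj
    have hjk : j < k := Finset.mem_range.1 hj
    rw [CF_succ]
    apply Finset.sum_subset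
    · exact Finset.range_subset_range.2 (by omega)
    · intro i _ hi
      have : j < i := by simp only [Finset.mem_range] at hi ⊢; omega
      rw [Nat.choose_eq_zero_of_lt this]
      push_cast; ring
  have hswap : ∑ j ∈ Finset.range k, ((k-j : ℕ) : ℝ) * CF A (m+1) (j+1)
      = ∑ i ∈ Finset.range k,
          (((k+1).choose (i+2) * (m+1+i+1).descFactorial (m+1) : ℕ) : ℝ) * A^(i+1) := by
    rw [Finset.sum_congr rfl (fun j hj => by rw [hB j hj])]
    simp only [Finset.mul_sum]
    rw [Finset.sum_comm]
    apply Finset.sum_congr rfl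
    intro i _
    have step1 : ∑ j ∈ Finset.range k,
        ((k-j : ℕ) : ℝ) * ((j.choose i * (m+1+i+1).descFactorial (m+1) : ℕ) * A^(i+1))
        = ((∑ j ∈ Finset.range k, (k - j) * j.choose i : ℕ) : ℝ)
            * (((m+1+i+1).descFactorial (m+1) : ℕ) * A^(i+1)) := by
      rw [Nat.cast_sum, Finset.sum_mul]
      apply Finset.sum_congr rfl
      intro j _
      push_cast
      ring
    rw [step1, nat_weighted]
    push_cast
    ring
  -- now expand the right-hand side
  have hR : CF A m (k+1)
      = (∑ i ∈ Finset.range k, ((k.choose (i+1) * (m+i+2).descFactorial m : ℕ) : ℝ) * A^(i+2))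
        + ((m+1).factorial : ℝ) * A := by
    rw [CF_succ]
    rw [Finset.sum_range_succ' (f := fun j => ((k.choose j * (m+j+1).descFactorial m : ℕ) : ℝ) * A^(j+1))]
    have es : ∀ i ∈ Finset.range k,
        ((k.choose (i+1) * (m+(i+1)+1).descFactorial m : ℕ) : ℝ) * A^((i+1)+1)
        = ((k.choose (i+1) * (m+i+2).descFactorial m : ℕ) : ℝ) * A^(i+2) := by
      intro i _
      rw [show m+(i+1)+1 = m+i+2 from by omega, show (i+1)+1 = i+2 from by omega]
    have e0 : ((k.choose 0 * (m+0+1).descFactorial m : ℕ) : ℝ) * A^(0+1)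
        = ((m+1).factorial : ℝ) * A := by
      rw [Nat.choose_zero_right, one_mul, show m+0+1 = m+1 from by omega, desc_succ_fac]
      norm_num
    rw [Finset.sum_congr rfl es, e0]
  have main : ∀ i ∈ Finset.range k,
      A * ((((k+1).choose (i+2) * (m+1+i+1).descFactorial (m+1) : ℕ) : ℝ) * A^(i+1))
      = ((k:ℝ)+1) * (((k.choose (i+1) * (m+i+2).descFactorial m : ℕ) : ℝ) * A^(i+2)) := by
    intro i _
    have key : ((k+1) * k.choose (i+1) : ℕ) = ((k+1).choose (i+2) * (i+2) : ℕ) :=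
      Nat.add_one_mul_choose_eq k (i+1)
    have hd : (m+1+i+1).descFactorial (m+1) = (i+2) * (m+i+2).descFactorial m := by
      rw [show m+1+i+1 = m+i+2 from by omega, Nat.descFactorial_succ]
      congr 1
      omega
    have keyR : ((k:ℝ)+1) * (k.choose (i+1) : ℕ)
        = (((k+1).choose (i+2) : ℕ) : ℝ) * ((i:ℝ)+2) := by exact_mod_cast key
    rw [hd]
    push_cast
    linear_combination (-(((m+i+2).descFactorial m : ℕ) : ℝ) * A^(i+2)) * keyR
  rw [hL, hswap, hR, mul_add, mul_add, Finset.mul_sum, Finset.mul_sum,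
    Finset.sum_congr rfl main]
  push_cast
  ring

lemma CF_le {A : ℝ} (hA : 0 < A) (k : ℕ) : CF A 0 (k+1) ≤ (A+1)^(k+1) := by
  have h1 : CF A 0 (k+1) = A * ∑ j ∈ Finset.range (k+1), A^j * 1^(k-j) * (k.choose j) := by
    rw [CF_succ, Finset.mul_sum]
    apply Finset.sum_congr rfl
    intro j _
    rw [Nat.descFactorial_zero, mul_one]
    push_cast
    ring
  rw [h1, ← add_pow]
  have h2 : (A+1)^(k+1) = (A+1) * (A+1)^k := by ring
  rw [h2]
  apply mul_le_mul_of_nonneg_right (by linarith) (by positivity)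

lemma conv_bound (F : ℝ → ℝ)
    (hFpos : ∀ v ∈ Ici (1:ℝ), 0 < F v)
    (hconv : ConvexOn ℝ (Ici 1) (fun v : ℝ => v * Real.log (F v)))
    {p q N : ℕ} (hp : 1 ≤ p) (hq : 1 ≤ q) (hpN : p ≤ N) (hqN : q ≤ N)
    (hsum : p + q = N + 1) :
    F p ^ p * F q ^ q ≤ F 1 * F N ^ N := by
  have hN : 1 ≤ N := le_trans hp hpN
  have hmem : ∀ n : ℕ, 1 ≤ n → ((n:ℝ) ∈ Ici (1:ℝ)) := fun n hn => by
    rw [Set.mem_Ici]; exact_mod_cast hn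
  have hFp := hFpos _ (hmem p hp)
  have hFq := hFpos _ (hmem q hq)
  have hF1 := hFpos 1 (by simp)
  have hFN := hFpos _ (hmem N hN)
  set φ : ℝ → ℝ := fun v => v * Real.log (F v) with hφ
  have hkey : φ p + φ q ≤ φ 1 + φ N := by
    rcases eq_or_lt_of_le hN with hN1 | hN2
    · have hp1 : p = 1 := by omega
      have hq1 : q = 1 := by omega
      subst hp1; rw [hq1, ← hN1]
      push_cast
      linarith
    · have hN2' : (2:ℝ) ≤ (N:ℝ) := by exact_mod_cast hN2
      have hNd : (0:ℝ) < (N:ℝ) - 1 := by linarith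
      set lam : ℝ := ((N:ℝ) - p)/((N:ℝ) - 1) with hlam
      have hpR : (1:ℝ) ≤ (p:ℝ) := by exact_mod_cast hp
      have hpNR : (p:ℝ) ≤ (N:ℝ) := by exact_mod_cast hpN
      have hqR : (1:ℝ) ≤ (q:ℝ) := by exact_mod_cast hq
      have hqNR : (q:ℝ) ≤ (N:ℝ) := by exact_mod_cast hqN
      have hsumR : (p:ℝ) + (q:ℝ) = (N:ℝ) + 1 := by exact_mod_cast hsum
      have hl0 : 0 ≤ lam := by apply div_nonneg <;> linarith
      have hl1 : lam ≤ 1 := by rw [div_le_one hNd]; linarith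
      have hc1 := hconv.2 (by simp : (1:ℝ) ∈ Ici (1:ℝ)) (hmem N hN) hl0 (by linarith : 0 ≤ 1 - lam) (by ring)
      have hc2 := hconv.2 (by simp : (1:ℝ) ∈ Ici (1:ℝ)) (hmem N hN) (by linarith : 0 ≤ 1 - lam) hl0 (by ring)
      have hNe : (N:ℝ) - 1 ≠ 0 := ne_of_gt hNd
      have he1 : lam • (1:ℝ) + (1 - lam) • (N:ℝ) = (p:ℝ) := by
        simp only [smul_eq_mul, hlam]
        field_simp
        ring
      have he2 : (1 - lam) • (1:ℝ) + lam • (N:ℝ) = (q:ℝ) := by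
        have hq' : (q:ℝ) = (N:ℝ) + 1 - (p:ℝ) := by linarith
        simp only [smul_eq_mul, hlam, hq']
        field_simp
        ring
      rw [he1] at hc1
      rw [he2] at hc2
      simp only [smul_eq_mul] at hc1 hc2
      calc φ p + φ q ≤ (lam * φ 1 + (1-lam) * φ N) + ((1-lam) * φ 1 + lam * φ N) := by
            exact add_le_add hc1 hc2
        _ = φ 1 + φ N := by ring
  -- exponentiate
  have hexp : ∀ (n : ℕ) (x : ℝ), 0 < x → x ^ n = Real.exp ((n:ℝ) * Real.log x) := by
    intro n x hx
    rw [Real.exp_nat_mul, Real.exp_log hx]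
  rw [hexp p _ hFp, hexp q _ hFq, hexp N _ hFN, ← Real.exp_add]
  have hF1' : F 1 = Real.exp (Real.log (F 1)) := (Real.exp_log hF1).symm
  rw [hF1', ← Real.exp_add]
  apply Real.exp_le_exp.2
  have : (1:ℝ) * Real.log (F 1) = Real.log (F 1) := by ring
  simpa [hφ, this] using hkey

lemma iter_deriv_singleton (u : ℝ → ℝ) (n : ℕ) (a : ℝ) :
    iteratedDerivWithin (n+1) u {a} a = 0 := by
  have h0 : iteratedFDerivWithin ℝ (n+1) u {a} a = 0 := by
    ext m
    rw [iteratedFDerivWithin_succ_apply_left]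
    have hiso : nhdsWithin a (({a} : Set ℝ) \ {a}) = ⊥ := by
      rw [Set.diff_self, nhdsWithin_empty]
    rw [fderivWithin_zero_of_not_accPt (fun hacc => by
      obtain ⟨y, ⟨_, hy⟩, hne⟩ := (accPt_iff_nhds.1 hacc) univ Filter.univ_mem
      exact hne hy)]
    simp
  have : ‖iteratedDerivWithin (n+1) u {a} a‖ = 0 := by
    rw [← norm_iteratedFDerivWithin_eq_norm_iteratedDerivWithin, h0, norm_zero]
  simpa using this

lemma iter_deriv_const {s : Set ℝ} (hs : UniqueDiffOn ℝ s) {x : ℝ} (hx : x ∈ s)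
    (c : ℝ) (n : ℕ) : iteratedDerivWithin (n+1) (fun _ => c) s x = 0 := by
  have h0 : iteratedFDerivWithin ℝ (n+1) (fun _ : ℝ => c) s x = 0 :=
    congrFun (iteratedFDerivWithin_succ_const (s := s) n c) x
  have : ‖iteratedDerivWithin (n+1) (fun _ : ℝ => c) s x‖ = 0 := by
    rw [← norm_iteratedFDerivWithin_eq_norm_iteratedDerivWithin, h0, norm_zero]
  simpa using this

theorem aux_main (F : ℝ → ℝ) (a₁ b₁ a₂ b₂ γ₁ γt₁ γ₂ γt₂ : ℝ)
    (h1 : a₁ < b₁) (h2 : a₂ < b₂)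
    (hγ₁ : 0 < γ₁) (hγt₁ : 0 < γt₁) (hγ₂ : 0 < γ₂) (hγt₂ : 0 < γt₂)
    (hFpos : ∀ v ∈ Ici (1:ℝ), 0 < F v)
    (hconv : ConvexOn ℝ (Ici 1) (fun v : ℝ => v * Real.log (F v)))
    (f g : ℝ → ℝ)
    (hf : ContDiffOn ℝ (⊤ : ℕ∞) f (Icc a₁ b₁))
    (hg : ContDiffOn ℝ (⊤ : ℕ∞) g (Icc a₂ b₂))
    (hfd : ∀ k : ℕ, 1 ≤ k → ∀ x ∈ Icc a₁ b₁,
      |iteratedDerivWithin k f (Icc a₁ b₁) x| ≤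
        (Nat.factorial k : ℝ) * γ₁ * (γt₁ * F k) ^ k)
    (hgd : ∀ k : ℕ, 1 ≤ k → ∀ x ∈ Icc a₂ b₂,
      |iteratedDerivWithin k g (Icc a₂ b₂) x| ≤
        (Nat.factorial k : ℝ) * γ₂ * (γt₂ * F k) ^ k)
    (hmaps : ∀ x ∈ Icc a₁ b₁, f x ∈ Icc a₂ b₂) :
    ∀ k m : ℕ, 1 ≤ m + k → ∀ x ∈ Icc a₁ b₁,
      |iteratedDerivWithin k (iteratedDerivWithin m g (Icc a₂ b₂) ∘ f) (Icc a₁ b₁) x| ≤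
        (Nat.factorial k : ℝ) * γ₂ * γt₂^m * γt₁^k * F (m+k) ^ (m+k)
          * CF (γ₁*γt₂*F 1) m k := by
  set s := Icc a₁ b₁ with hsdef
  set t := Icc a₂ b₂ with htdef
  have hs : UniqueDiffOn ℝ s := uniqueDiffOn_Icc h1
  have ht : UniqueDiffOn ℝ t := uniqueDiffOn_Icc h2
  have hF1 : 0 < F 1 := hFpos 1 (by simp)
  have hA : 0 < γ₁*γt₂*F 1 := by positivity
  set A := γ₁*γt₂*F 1 with hAdef
  have hmapsTo : MapsTo f s t := fun y hy => hmaps y hy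
  have hFnat : ∀ n : ℕ, 1 ≤ n → 0 < F n := by
    intro n hn
    apply hFpos
    rw [Set.mem_Ici]
    exact_mod_cast hn
  have smooth_Dg : ∀ m : ℕ, ContDiffOn ℝ (⊤ : ℕ∞) (iteratedDerivWithin m g t) t := by
    intro m
    induction m with
    | zero => simpa [iteratedDerivWithin_zero] using hg
    | succ m IH =>
      exact (IH.derivWithin ht (by simp)).congr (fun y hy => congrFun iteratedDerivWithin_succ y)
  intro k
  induction k using Nat.strong_induction_on with
  | _ k IH =>
    intro m hmk x hx
    cases k with
    | zero =>
      have hm : 1 ≤ m := by omega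
      have hb := hgd m hm (f x) (hmaps x hx)
      rw [iteratedDerivWithin_zero]
      rw [show ((m:ℝ) + ((0:ℕ):ℝ)) = ((m:ℕ):ℝ) from by push_cast; ring]
      refine le_trans hb (le_of_eq ?_)
      rw [CF_zero, mul_pow]
      simp only [Nat.factorial_zero, pow_zero, Nat.add_zero, Nat.cast_one]
      ring
    | succ k =>
      rw [show ((m:ℝ) + ((k+1:ℕ):ℝ)) = ((m+(k+1) : ℕ):ℝ) from by push_cast; ring]
      -- the two factors
      set v := iteratedDerivWithin (m+1) g t ∘ f with hvdef
      set w := derivWithin f s with hwdef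
      have hvsmooth : ContDiffOn ℝ (⊤ : ℕ∞) v s := (smooth_Dg (m+1)).comp hf hmapsTo
      have hwsmooth : ContDiffOn ℝ (⊤ : ℕ∞) w s := hf.derivWithin hs (by simp)
      have heqon : Set.EqOn (derivWithin (iteratedDerivWithin m g t ∘ f) s)
          (fun y => v y * w y) s := by
        intro y hy
        have hdg : DifferentiableWithinAt ℝ (iteratedDerivWithin m g t) t (f y) :=
          ((smooth_Dg m).differentiableOn (by simp)) (f y) (hmaps y hy)
        have hdf : DifferentiableWithinAt ℝ f s y := (hf.differentiableOn (by simp)) y hy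
        have := derivWithin_comp y hdg hdf hmapsTo
        rw [this]
        have : derivWithin (iteratedDerivWithin m g t) t (f y)
            = iteratedDerivWithin (m+1) g t (f y) :=
          (congrFun iteratedDerivWithin_succ (f y)).symm
        rw [this]
        rfl
      have hstep : iteratedDerivWithin (k+1) (iteratedDerivWithin m g t ∘ f) s x
          = iteratedDerivWithin k (fun y => v y * w y) s x := by
        rw [iteratedDerivWithin_succ']
        exact iteratedDerivWithin_congr heqon hx
      rw [hstep]
      -- Leibniz bound
      have hleib : |iteratedDerivWithin k (fun y => v y * w y) s x| ≤
          ∑ i ∈ Finset.range (k + 1), (k.choose i : ℝ)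
            * ‖iteratedFDerivWithin ℝ i v s x‖ * ‖iteratedFDerivWithin ℝ (k - i) w s x‖ := by
        rw [← Real.norm_eq_abs, ← norm_iteratedFDerivWithin_eq_norm_iteratedDerivWithin]
        exact norm_iteratedFDerivWithin_mul_le hvsmooth hwsmooth hs hx (by exact_mod_cast le_top)
      -- termwise bound
      have hterm : ∀ i ∈ Finset.range (k+1), (k.choose i : ℝ)
            * ‖iteratedFDerivWithin ℝ i v s x‖ * ‖iteratedFDerivWithin ℝ (k - i) w s x‖
          ≤ ((k.factorial : ℝ) * γ₂ * γt₂^m * γt₁^(k+1) * F ((m+(k+1) : ℕ) : ℝ) ^ (m+(k+1)))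
              * (((k+1-i : ℕ) : ℝ) * (A * CF A (m+1) i)) := by
        intro i hik
        have hik' : i ≤ k := by simpa using Nat.lt_succ_iff.1 (Finset.mem_range.1 hik)
        -- bound on v-factor
        have hv : ‖iteratedFDerivWithin ℝ i v s x‖ ≤
            (i.factorial : ℝ) * γ₂ * γt₂^(m+1) * γt₁^i * F ((m+1+i : ℕ) : ℝ) ^ (m+1+i)
              * CF A (m+1) i := by
          rw [norm_iteratedFDerivWithin_eq_norm_iteratedDerivWithin, Real.norm_eq_abs]
          have hv0 := IH i (by omega) (m+1) (by omega) x hx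
          rw [show (((m+1:ℕ):ℝ) + ((i:ℕ):ℝ)) = ((m+1+i : ℕ):ℝ) from by push_cast; ring]
            at hv0
          exact hv0
        -- bound on w-factor
        have hw : ‖iteratedFDerivWithin ℝ (k-i) w s x‖ ≤
            ((k+1-i).factorial : ℝ) * γ₁ * (γt₁ * F ((k+1-i : ℕ) : ℝ)) ^ (k+1-i) := by
          rw [norm_iteratedFDerivWithin_eq_norm_iteratedDerivWithin, Real.norm_eq_abs]
          have hsucc : iteratedDerivWithin (k-i) w s x
              = iteratedDerivWithin ((k-i)+1) f s x :=
            (congrFun iteratedDerivWithin_succ' x).symm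
          rw [hsucc, show (k-i)+1 = k+1-i from by omega]
          exact hfd (k+1-i) (by omega) x hx
        have hnn1 : (0:ℝ) ≤ (k.choose i : ℝ) := by positivity
        have hnn2 : (0:ℝ) ≤ ‖iteratedFDerivWithin ℝ i v s x‖ := norm_nonneg _
        have hnn3 : (0:ℝ) ≤ ‖iteratedFDerivWithin ℝ (k-i) w s x‖ := norm_nonneg _
        have hCFnn : (0:ℝ) < CF A (m+1) i := CF_pos hA _ _
        have hFm1i : 0 < F ((m+1+i : ℕ) : ℝ) := hFnat (m+1+i) (by omega)
        have hFk1i : 0 < F ((k+1-i : ℕ) : ℝ) := hFnat (k+1-i) (by omega)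
        have hFmk1 : 0 < F ((m+(k+1) : ℕ) : ℝ) := hFnat (m+(k+1)) (by omega)
        -- combine
        calc (k.choose i : ℝ)
            * ‖iteratedFDerivWithin ℝ i v s x‖ * ‖iteratedFDerivWithin ℝ (k - i) w s x‖
            ≤ (k.choose i : ℝ)
              * ((i.factorial : ℝ) * γ₂ * γt₂^(m+1) * γt₁^i * F ((m+1+i : ℕ) : ℝ) ^ (m+1+i)
                  * CF A (m+1) i)
              * (((k+1-i).factorial : ℝ) * γ₁ * (γt₁ * F ((k+1-i : ℕ) : ℝ)) ^ (k+1-i)) := by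
              exact mul_le_mul (mul_le_mul_of_nonneg_left hv hnn1) hw hnn3 (by positivity)
          _ = ((k.choose i : ℝ) * (i.factorial : ℝ) * ((k+1-i).factorial : ℝ))
              * (γ₂ * γt₂^m * γt₁^(k+1) * (γ₁ * γt₂) * CF A (m+1) i)
              * (F ((m+1+i : ℕ) : ℝ) ^ (m+1+i) * F ((k+1-i : ℕ) : ℝ) ^ (k+1-i)) := by
              rw [mul_pow]
              have hexp : γt₁^i * γt₁^(k+1-i) = γt₁^(k+1) := by
                rw [← pow_add]
                congr 1
                omega
              rw [← hexp]
              ring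
          _ ≤ ((k.choose i : ℝ) * (i.factorial : ℝ) * ((k+1-i).factorial : ℝ))
              * (γ₂ * γt₂^m * γt₁^(k+1) * (γ₁ * γt₂) * CF A (m+1) i)
              * (F 1 * F ((m+(k+1) : ℕ) : ℝ) ^ (m+(k+1))) := by
              apply mul_le_mul_of_nonneg_left _ (by positivity)
              exact conv_bound F hFpos hconv (p := m+1+i) (q := k+1-i) (N := m+(k+1))
                (by omega) (by omega) (by omega) (by omega) (by omega)
          _ = ((k.choose i : ℝ) * (i.factorial : ℝ) * ((k+1-i).factorial : ℝ))
              * ((γ₂ * γt₂^m * γt₁^(k+1) * F ((m+(k+1) : ℕ) : ℝ) ^ (m+(k+1)))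
                  * (A * CF A (m+1) i)) := by
              rw [hAdef]
              ring
          _ ≤ ((k.factorial : ℝ) * γ₂ * γt₂^m * γt₁^(k+1) * F ((m+(k+1) : ℕ) : ℝ) ^ (m+(k+1)))
              * (((k+1-i : ℕ) : ℝ) * (A * CF A (m+1) i)) := by
              have hcomb : (k.choose i) * (i.factorial) * ((k+1-i).factorial)
                  = k.factorial * (k+1-i) := by
                have h3 : (k+1-i).factorial = (k+1-i) * (k-i).factorial := by
                  rw [show k+1-i = (k-i)+1 from by omega, Nat.factorial_succ]
                have h4 := Nat.choose_mul_factorial_mul_factorial hik'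
                calc k.choose i * i.factorial * (k+1-i).factorial
                    = (k.choose i * i.factorial * (k-i).factorial) * (k+1-i) := by
                      rw [h3]; ring
                  _ = k.factorial * (k+1-i) := by rw [h4]
              have hcombR : ((k.choose i : ℝ) * (i.factorial : ℝ) * ((k+1-i).factorial : ℝ))
                  = (k.factorial : ℝ) * ((k+1-i : ℕ) : ℝ) := by exact_mod_cast hcomb
              rw [hcombR]
              apply le_of_eq
              ring
      -- sum up
      calc |iteratedDerivWithin k (fun y => v y * w y) s x|
          ≤ ∑ i ∈ Finset.range (k + 1), (k.choose i : ℝ)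
            * ‖iteratedFDerivWithin ℝ i v s x‖
            * ‖iteratedFDerivWithin ℝ (k - i) w s x‖ := hleib
        _ ≤ ∑ i ∈ Finset.range (k + 1),
            ((k.factorial : ℝ) * γ₂ * γt₂^m * γt₁^(k+1) * F ((m+(k+1) : ℕ) : ℝ) ^ (m+(k+1)))
              * (((k+1-i : ℕ) : ℝ) * (A * CF A (m+1) i)) :=
            Finset.sum_le_sum hterm
        _ = ((k.factorial : ℝ) * γ₂ * γt₂^m * γt₁^(k+1) * F ((m+(k+1) : ℕ) : ℝ) ^ (m+(k+1)))
            * (A * ∑ i ∈ Finset.range (k + 1), ((k+1-i : ℕ) : ℝ) * CF A (m+1) i) := by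
            simp only [Finset.mul_sum]
            apply Finset.sum_congr rfl
            intro i _
            ring
        _ = ((k+1).factorial : ℝ) * γ₂ * γt₂^m * γt₁^(k+1) * F ((m+(k+1) : ℕ) : ℝ) ^ (m+(k+1))
            * CF A m (k+1) := by
            rw [CF_rec A m k]
            rw [Nat.factorial_succ]
            push_cast
            ring
/-- Faà di Bruno type estimate: if `f ∈ R(a₁,b₁,F;γ₁,γ̃₁)`, `g ∈ R(a₂,b₂,F;γ₂,γ̃₂)`
and `f` maps `[a₁,b₁]` into `[a₂,b₂]`, where `F` is positive, nondecreasing and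
`v ln F(v)` is convex on `[1,∞)`, then
`(1/k!)‖(g∘f)^{(k)}‖ ≤ γ₂ [γ̃₁(γ₁γ̃₂F(1)+1)F(k)]^k` for all `k ≥ 1`. -/
theorem stmt7 (F : ℝ → ℝ) (a₁ b₁ a₂ b₂ γ₁ γt₁ γ₂ γt₂ : ℝ)
    (hab₁ : a₁ ≤ b₁) (hab₂ : a₂ ≤ b₂)
    (hγ₁ : 0 < γ₁) (hγt₁ : 0 < γt₁) (hγ₂ : 0 < γ₂) (hγt₂ : 0 < γt₂)
    (hFpos : ∀ v ∈ Ici (1:ℝ), 0 < F v)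
    (hFmono : MonotoneOn F (Ici 1))
    (hconv : ConvexOn ℝ (Ici 1) (fun v : ℝ => v * Real.log (F v)))
    (f g : ℝ → ℝ)
    (hf : ContDiffOn ℝ (⊤ : ℕ∞) f (Icc a₁ b₁))
    (hg : ContDiffOn ℝ (⊤ : ℕ∞) g (Icc a₂ b₂))
    (hfd : ∀ k : ℕ, 1 ≤ k → ∀ x ∈ Icc a₁ b₁,
      |iteratedDerivWithin k f (Icc a₁ b₁) x| ≤
        (Nat.factorial k : ℝ) * γ₁ * (γt₁ * F k) ^ k)
    (hgd : ∀ k : ℕ, 1 ≤ k → ∀ x ∈ Icc a₂ b₂,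
      |iteratedDerivWithin k g (Icc a₂ b₂) x| ≤
        (Nat.factorial k : ℝ) * γ₂ * (γt₂ * F k) ^ k)
    (hmaps : ∀ x ∈ Icc a₁ b₁, f x ∈ Icc a₂ b₂) :
    ∀ k : ℕ, 1 ≤ k → ∀ x ∈ Icc a₁ b₁,
      |iteratedDerivWithin k (g ∘ f) (Icc a₁ b₁) x| ≤
        (Nat.factorial k : ℝ) * γ₂ * (γt₁ * (γ₁ * γt₂ * F 1 + 1) * F k) ^ k := by
  have hF1 : 0 < F 1 := hFpos 1 (by simp)
  have hFnat : ∀ n : ℕ, 1 ≤ n → 0 < F n := by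
    intro n hn
    apply hFpos
    rw [Set.mem_Ici]
    exact_mod_cast hn
  intro k hk x hx
  obtain ⟨k', rfl⟩ : ∃ k', k = k'+1 := ⟨k-1, by omega⟩
  have hRHSpos : 0 < ((k'+1).factorial : ℝ) * γ₂
      * (γt₁ * (γ₁ * γt₂ * F 1 + 1) * F (k'+1 : ℕ)) ^ (k'+1) := by
    have hb : 0 < γt₁ * (γ₁ * γt₂ * F 1 + 1) * F (k'+1 : ℕ) := by
      have h1 : 0 < γ₁ * γt₂ * F 1 + 1 := by
        have := mul_pos (mul_pos hγ₁ hγt₂) hF1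
        linarith
      exact mul_pos (mul_pos hγt₁ h1) (hFnat (k'+1) (by omega))
    have := pow_pos hb (k'+1)
    have hfac : (0:ℝ) < ((k'+1).factorial : ℝ) := by positivity
    positivity
  rcases eq_or_lt_of_le hab₁ with h1 | h1
  · -- degenerate: a₁ = b₁
    have hset : Icc a₁ b₁ = ({a₁} : Set ℝ) := by rw [← h1, Set.Icc_self]
    have hxa : x = a₁ := by rw [hset] at hx; simpa using hx
    rw [hset, hxa, iter_deriv_singleton, abs_zero]
    exact le_of_lt hRHSpos
  · rcases eq_or_lt_of_le hab₂ with h2 | h2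
    · -- degenerate: a₂ = b₂, f is constant
      have hs := uniqueDiffOn_Icc h1
      have hconst : Set.EqOn (g ∘ f) (fun _ => g a₂) (Icc a₁ b₁) := by
        intro y hy
        have hfy := hmaps y hy
        rw [← h2, Set.Icc_self] at hfy
        have : f y = a₂ := by simpa using hfy
        simp [Function.comp, this]
      rw [iteratedDerivWithin_congr hconst hx, iter_deriv_const hs hx, abs_zero]
      exact le_of_lt hRHSpos
    · -- main case
      have h := aux_main F a₁ b₁ a₂ b₂ γ₁ γt₁ γ₂ γt₂ h1 h2 hγ₁ hγt₁ hγ₂ hγt₂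
        hFpos hconv f g hf hg hfd hgd hmaps (k'+1) 0 (by omega) x hx
      rw [iteratedDerivWithin_zero] at h
      rw [show (((0:ℕ)):ℝ) + ((k'+1:ℕ):ℝ) = ((k'+1 : ℕ):ℝ) from by push_cast; ring] at h
      simp only [Nat.zero_add, pow_zero, mul_one] at h
      have hA : 0 < γ₁ * γt₂ * F 1 := mul_pos (mul_pos hγ₁ hγt₂) hF1
      have hCF := CF_le hA k'
      have hprefnn : (0:ℝ) ≤ ((k'+1).factorial : ℝ) * γ₂ * γt₁^(k'+1)
          * F ((k'+1 : ℕ) : ℝ) ^ (k'+1) := by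
        have hFk := hFnat (k'+1) (by omega)
        positivity
      calc |iteratedDerivWithin (k'+1) (g ∘ f) (Icc a₁ b₁) x|
          ≤ ((k'+1).factorial : ℝ) * γ₂ * γt₁^(k'+1) * F ((k'+1 : ℕ) : ℝ) ^ (k'+1)
            * CF (γ₁ * γt₂ * F 1) 0 (k'+1) := h
        _ ≤ ((k'+1).factorial : ℝ) * γ₂ * γt₁^(k'+1) * F ((k'+1 : ℕ) : ℝ) ^ (k'+1)
            * (γ₁ * γt₂ * F 1 + 1)^(k'+1) := mul_le_mul_of_nonneg_left hCF hprefnn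
        _ = ((k'+1).factorial : ℝ) * γ₂
            * (γt₁ * (γ₁ * γt₂ * F 1 + 1) * F ((k'+1:ℕ))) ^ (k'+1) := by
            rw [mul_pow, mul_pow]
            ring
end

section
/- Let F : [1,∞) → (0,∞) be nondecreasing with v ln F(v) convex on [1,∞). Among all multi-indices m ∈ ℕ₀^k with ∑_j j·m_j = k and |m| = n, the product ∏_{j=1}^k F(j)^{j·m_j} is at most F(1)^{n−1} F(k−n+1)^{k−n+1}. -/
open Real Set Finset

/-!
Put `g v = v log F(v)` and `b = k - n + 1`. Taking logarithms, the claim reads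
`∑_j m_j g(j) ≤ (n - 1) g(1) + g(b)`. Every `j` with `m_j ≠ 0` lies in `[1, b]`, where the
convex `g` stays below its chord from `1` to `b`. Summing the chord bound with weights
`m_j` only involves `∑ m_j = n` and `∑ m_j (j - 1) = k - n = b - 1`, and gives exactly the
right-hand side.
-/

/-- Also for `a = b`, where `slope f a a = 0`. -/
theorem ConvexOn.le_add_slope_mul {s : Set ℝ} {f : ℝ → ℝ} (hf : ConvexOn ℝ s f) {a b x : ℝ}
    (ha : a ∈ s) (hb : b ∈ s) (hx : x ∈ Icc a b) :
    f x ≤ f a + slope f a b * (x - a) := by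
  rcases hx.1.eq_or_lt with rfl | hax
  · simp
  have hxs : x ∈ s := hf.1.ordConnected.out ha hb hx
  have hsecant := hf.secant_mono ha hxs hb hax.ne' (hax.trans_le hx.2).ne' hx.2
  rw [div_le_iff₀ (sub_pos.2 hax)] at hsecant
  rw [slope_def_field]
  linarith

theorem ConvexOn.sum_mul_le_of_mem_Icc {ι : Type*} (t : Finset ι) {s : Set ℝ} {f : ℝ → ℝ}
    (hf : ConvexOn ℝ s f) {a b : ℝ} (ha : a ∈ s) (hb : b ∈ s) (w x : ι → ℝ)
    (hw : ∀ i ∈ t, 0 ≤ w i) (hx : ∀ i ∈ t, w i ≠ 0 → x i ∈ Icc a b) :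
    ∑ i ∈ t, w i * f (x i) ≤
      (∑ i ∈ t, w i) * f a + slope f a b * ∑ i ∈ t, w i * (x i - a) := by
  calc ∑ i ∈ t, w i * f (x i)
      ≤ ∑ i ∈ t, w i * (f a + slope f a b * (x i - a)) := by
        refine sum_le_sum fun i hi => ?_
        rcases eq_or_ne (w i) 0 with hwi | hwi
        · simp [hwi]
        · exact mul_le_mul_of_nonneg_left (hf.le_add_slope_mul ha hb (hx i hi hwi)) (hw i hi)
    _ = (∑ i ∈ t, w i) * f a + slope f a b * ∑ i ∈ t, w i * (x i - a) := by
        rw [sum_mul, mul_sum, ← sum_add_distrib]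
        exact sum_congr rfl fun i _ => by ring

section Partitions

variable {k n : ℕ} (m : Fin k → ℕ)

theorem sum_val_mul_add_eq (h1 : ∑ j : Fin k, (j.1 + 1) * m j = k)
    (h2 : ∑ j : Fin k, m j = n) : ∑ j : Fin k, j.1 * m j + n = k := by
  refine Eq.trans ?_ h1
  rw [← h2, ← sum_add_distrib]
  exact sum_congr rfl fun j _ => by ring

theorem val_add_le_of_ne_zero (h1 : ∑ j : Fin k, (j.1 + 1) * m j = k)
    (h2 : ∑ j : Fin k, m j = n) {j : Fin k} (hj : m j ≠ 0) : j.1 + n ≤ k := by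
  have hjm : j.1 ≤ j.1 * m j := Nat.le_mul_of_pos_right _ (Nat.pos_of_ne_zero hj)
  have hsingle : j.1 * m j ≤ ∑ i : Fin k, i.1 * m i :=
    single_le_sum (f := fun i : Fin k => i.1 * m i) (fun _ _ => Nat.zero_le _) (mem_univ j)
  have := sum_val_mul_add_eq m h1 h2
  omega

theorem ConvexOn.sum_mul_le_of_sum_mul_eq {g : ℝ → ℝ} (hg : ConvexOn ℝ (Ici 1) g)
    (h1 : ∑ j : Fin k, (j.1 + 1) * m j = k) (h2 : ∑ j : Fin k, m j = n) :
    ∑ j : Fin k, (m j : ℝ) * g ((j.1 : ℝ) + 1) ≤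
      ((n : ℝ) - 1) * g 1 + g ((k : ℝ) - n + 1) := by
  set b : ℝ := (k : ℝ) - n + 1
  have hkn : (n : ℝ) ≤ k := by exact_mod_cast (sum_val_mul_add_eq m h1 h2).symm ▸ le_add_self
  have hmem : ∀ j ∈ (univ : Finset (Fin k)), (m j : ℝ) ≠ 0 → (j.1 : ℝ) + 1 ∈ Icc 1 b := by
    intro j _ hj
    have hle : ((j.1 + n : ℕ) : ℝ) ≤ k := by
      exact_mod_cast val_add_le_of_ne_zero m h1 h2 (by exact_mod_cast hj)
    push_cast at hle
    exact ⟨le_add_of_nonneg_left (Nat.cast_nonneg _), by linarith⟩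
  have hdisp : ∑ j : Fin k, (m j : ℝ) * ((j.1 : ℝ) + 1 - 1) = b - 1 := by
    have := congrArg (fun N : ℕ => (N : ℝ)) (sum_val_mul_add_eq m h1 h2)
    push_cast at this
    simp only [add_sub_cancel_right, mul_comm (m _ : ℝ), b]
    linarith
  have hchord : slope g 1 b * (b - 1) = g b - g 1 := by
    rw [mul_comm]; exact sub_smul_slope g 1 b
  have hb : b ∈ Set.Ici 1 := by rw [Set.mem_Ici]; linarith
  have hsum := hg.sum_mul_le_of_mem_Icc univ self_mem_Ici hb (fun j => (m j : ℝ))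
    (fun j => (j.1 : ℝ) + 1) (fun _ _ => Nat.cast_nonneg _) hmem
  rw [hdisp, hchord] at hsum
  have hcard : ∑ j : Fin k, (m j : ℝ) = n := by exact_mod_cast h2
  simp only [hcard] at hsum
  linarith

end Partitions

theorem stmt9_general (F : ℝ → ℝ) (k n : ℕ) (hn : 1 ≤ n) (hnk : n ≤ k)
    (hFpos : ∀ v ∈ Ici (1:ℝ), 0 < F v)
    (hconv : ConvexOn ℝ (Ici 1) (fun v : ℝ => v * Real.log (F v))) :
    ∀ m : Fin k → ℕ,
      (∑ j : Fin k, (j.1 + 1) * m j = k) → (∑ j : Fin k, m j = n) →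
      ∏ j : Fin k, F ((j.1 : ℝ) + 1) ^ ((j.1 + 1) * m j) ≤
        F 1 ^ (n - 1) * F ((k : ℝ) - n + 1) ^ (k - n + 1) := by
  intro m h1 h2
  have hkey := hconv.sum_mul_le_of_sum_mul_eq m h1 h2
  have hpos : ∀ j : Fin k, 0 < F ((j.1 : ℝ) + 1) := fun j => hFpos _ (by simp)
  have hF1 : 0 < F 1 := hFpos 1 self_mem_Ici
  have hFb : 0 < F ((k : ℝ) - n + 1) := hFpos _ (by simp [hnk])
  rw [← Real.log_le_log_iff (prod_pos fun j _ => pow_pos (hpos j) _) (by positivity),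
    Real.log_prod fun j _ => (pow_pos (hpos j) _).ne', Real.log_mul (by positivity) (by positivity)]
  simp only [Real.log_pow]
  push_cast [Nat.cast_sub hn, Nat.cast_sub hnk]
  convert hkey using 2
  · ring
  · ring

/-- If `F` is nondecreasing on `[1,∞)` with `v ln F(v)` convex, then among all
`m ∈ ℕ₀^k` with `∑_j j·m_j = k` and `|m| = n`, the product `∏_j F(j)^{j·m_j}`
is at most `F(1)^{n-1} F(k-n+1)^{k-n+1}`. -/
theorem stmt9 (F : ℝ → ℝ) (k n : ℕ) (hk : 1 ≤ k) (hn : 1 ≤ n) (hnk : n ≤ k)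
    (hFpos : ∀ v ∈ Ici (1:ℝ), 0 < F v)
    (hFmono : MonotoneOn F (Ici 1))
    (hconv : ConvexOn ℝ (Ici 1) (fun v : ℝ => v * Real.log (F v))) :
    ∀ m : Fin k → ℕ,
      (∑ j : Fin k, (j.1 + 1) * m j = k) → (∑ j : Fin k, m j = n) →
      ∏ j : Fin k, F ((j.1 : ℝ) + 1) ^ ((j.1 + 1) * m j) ≤
        F 1 ^ (n - 1) * F ((k : ℝ) - n + 1) ^ (k - n + 1) :=
  stmt9_general F k n hn hnk hFpos hconv
end

section
/- For x, y ∈ the unit ball B^d with A(x) := √(1−‖x‖₂²) and ρ(x,y) := arccos(⟨x,y⟩ + A(x)A(y)), one has |A(x) − A(y)| ≤ √2 · ρ(x,y). -/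
open Real

/-!
Lift the ball to the upper unit hemisphere by `x ↦ (x, A(x))`. Then
`⟨x,y⟩ + A(x)A(y)` is the inner product of the lifted unit vectors and `ρ(x,y)` is the angle
between them, so `|A(x) - A(y)|` is at most the chord length, which is at most the arc length
`ρ(x,y)` (from `1 - θ²/2 ≤ cos θ`). This even gives the constant `1` in place of `√2`.
-/

theorem Real.two_sub_two_mul_le_arccos_sq {t : ℝ} (ht : -1 ≤ t) :
    2 - 2 * t ≤ arccos t ^ 2 := by
  rcases le_or_gt t 1 with ht' | ht'
  · have hcos := one_sub_sq_div_two_le_cos (x := arccos t)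
    rw [cos_arccos ht ht'] at hcos
    linarith
  · rw [arccos_eq_zero.mpr ht'.le]
    linarith

theorem sq_sqrt_one_sub_norm_sq {E : Type*} [SeminormedAddGroup E] {x : E} (hx : ‖x‖ ≤ 1) :
    √(1 - ‖x‖ ^ 2) ^ 2 = 1 - ‖x‖ ^ 2 :=
  sq_sqrt (by nlinarith [norm_nonneg x])

section UnitBall

variable {E : Type*} [NormedAddCommGroup E] [InnerProductSpace ℝ E] {x y : E}

theorem two_sub_two_mul_inner_add_sqrt_mul_sqrt_eq (hx : ‖x‖ ≤ 1) (hy : ‖y‖ ≤ 1) :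
    2 - 2 * (inner ℝ x y + √(1 - ‖x‖ ^ 2) * √(1 - ‖y‖ ^ 2)) =
      ‖x - y‖ ^ 2 + (√(1 - ‖x‖ ^ 2) - √(1 - ‖y‖ ^ 2)) ^ 2 := by
  rw [norm_sub_sq_real]
  linear_combination -sq_sqrt_one_sub_norm_sq hx - sq_sqrt_one_sub_norm_sq hy

theorem neg_one_le_inner_add_sqrt_mul_sqrt (hx : ‖x‖ ≤ 1) (hy : ‖y‖ ≤ 1) :
    -1 ≤ inner ℝ x y + √(1 - ‖x‖ ^ 2) * √(1 - ‖y‖ ^ 2) := by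
  have hinner : -(‖x‖ * ‖y‖) ≤ inner ℝ x y := (abs_le.mp (abs_real_inner_le_norm x y)).1
  have hnorms : ‖x‖ * ‖y‖ ≤ 1 := mul_le_one₀ hx (norm_nonneg y) hy
  have hsqrt : 0 ≤ √(1 - ‖x‖ ^ 2) * √(1 - ‖y‖ ^ 2) := by positivity
  linarith

theorem abs_sqrt_one_sub_norm_sq_sub_le_arccos (hx : ‖x‖ ≤ 1) (hy : ‖y‖ ≤ 1) :
    |√(1 - ‖x‖ ^ 2) - √(1 - ‖y‖ ^ 2)| ≤
      arccos (inner ℝ x y + √(1 - ‖x‖ ^ 2) * √(1 - ‖y‖ ^ 2)) := by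
  refine abs_le_of_sq_le_sq ?_ (arccos_nonneg _)
  calc (√(1 - ‖x‖ ^ 2) - √(1 - ‖y‖ ^ 2)) ^ 2
      ≤ ‖x - y‖ ^ 2 + (√(1 - ‖x‖ ^ 2) - √(1 - ‖y‖ ^ 2)) ^ 2 :=
        le_add_of_nonneg_left (sq_nonneg _)
    _ = 2 - 2 * (inner ℝ x y + √(1 - ‖x‖ ^ 2) * √(1 - ‖y‖ ^ 2)) :=
        (two_sub_two_mul_inner_add_sqrt_mul_sqrt_eq hx hy).symm
    _ ≤ _ := two_sub_two_mul_le_arccos_sq (neg_one_le_inner_add_sqrt_mul_sqrt hx hy)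

end UnitBall

/-- On the unit ball `B^d`, with `A(x) = √(1-‖x‖²)` and
`ρ(x,y) = arccos(⟨x,y⟩ + A(x)A(y))`, one has `|A(x) - A(y)| ≤ √2 ρ(x,y)`. -/
theorem stmt14 (d : ℕ) (x y : EuclideanSpace ℝ (Fin d))
    (hx : ‖x‖ ≤ 1) (hy : ‖y‖ ≤ 1) :
    |Real.sqrt (1 - ‖x‖ ^ 2) - Real.sqrt (1 - ‖y‖ ^ 2)| ≤
      Real.sqrt 2 *
        Real.arccos ((inner ℝ x y : ℝ) +
          Real.sqrt (1 - ‖x‖ ^ 2) * Real.sqrt (1 - ‖y‖ ^ 2)) :=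
  (abs_sqrt_one_sub_norm_sq_sub_le_arccos hx hy).trans
    (le_mul_of_one_le_left (arccos_nonneg _) one_lt_sqrt_two.le)
end

section
/- Let α, β ≥ −1/2 and μ the measure on [−1,1] with density (1−t)^α(1+t)^β. For y = cos φ ∈ [−1,1] and 0 < δ ≤ π, let B(y,δ) := {x ∈ [−1,1] : |arccos x − arccos y| < δ}. Then μ(B(y,δ)) is comparable to δ(√(1−y²)+δ)^{2γ+1} with γ = α if y ≥ 0 and γ = β if y < 0, with constants depending only on α, β. -/
open Real Set MeasureTheory

/-!
Substituting `t = cos θ` turns `μ(B(y, δ))` into the integral of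
`2^(α+β+1) sin(θ/2)^(2α+1) cos(θ/2)^(2β+1)` over `[0, π] ∩ (φ - δ, φ + δ)`, `φ = arccos y`.
The reflection `t ↦ -t` exchanges `α` and `β` and sends `y` to `-y`, so we may take `y ≥ 0`,
i.e. `φ ≤ π / 2`. Both exponents are nonnegative, `cos(θ/2)` stays away from `0` for
`θ ≤ 3π/4`, and `sin(θ/2) ≍ θ`, `sin φ ≍ φ`. Hence the integrand is `≲ (sin φ + δ)^(2α+1)` on an
interval of length `2δ`, and `≳ (sin φ + δ)^(2α+1)` on `(φ + δ/8, φ + δ/4)`.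
-/

namespace JacobiArcBall

noncomputable section

def jacobiWeight (α β t : ℝ) : ℝ := (1 - t) ^ α * (1 + t) ^ β

def arcBall (y δ : ℝ) : Set ℝ := {x | x ∈ Icc (-1) 1 ∧ |arccos x - arccos y| < δ}

/-- `sin θ * jacobiWeight α β (cos θ)` in half-angle form: the density of the image of `μ`
under `arccos`. -/
def jacobiAngularDensity (α β θ : ℝ) : ℝ :=
  2 ^ (α + β + 1) * (sin (θ / 2) ^ (2 * α + 1) * cos (θ / 2) ^ (2 * β + 1))

end

theorem sin_mul_jacobiWeight_cos (α β : ℝ) {θ : ℝ} (h0 : 0 < θ) (hπ : θ < π) :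
    sin θ * jacobiWeight α β (cos θ) = jacobiAngularDensity α β θ := by
  set u := sin (θ / 2)
  set v := cos (θ / 2)
  have hu : 0 < u := sin_pos_of_pos_of_lt_pi (by linarith) (by linarith)
  have hv : 0 < v := cos_pos_of_mem_Ioo ⟨by linarith, by linarith⟩
  have hsin : sin θ = 2 * u * v := by rw [← sin_two_mul]; ring_nf
  have hcos : cos θ = 2 * v ^ 2 - 1 := by rw [cos_sq]; ring_nf
  have hsq (w p : ℝ) (hw : 0 < w) : (2 * w ^ 2) ^ p = 2 ^ p * w ^ (2 * p) := by
    rw [mul_rpow two_pos.le (sq_nonneg w), ← rpow_natCast_mul hw.le]; norm_num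
  have h1 : 1 - cos θ = 2 * u ^ 2 := by rw [hcos]; linarith [sin_sq_add_cos_sq (θ / 2)]
  have h2 : 1 + cos θ = 2 * v ^ 2 := by rw [hcos]; ring
  rw [jacobiWeight, jacobiAngularDensity, hsin, h1, h2, hsq u α hu, hsq v β hv,
    rpow_add_one hu.ne', rpow_add_one hv.ne', rpow_add_one two_ne_zero, rpow_add two_pos]
  ring

theorem continuous_jacobiAngularDensity {α β : ℝ} (hα : -(1 / 2) ≤ α) (hβ : -(1 / 2) ≤ β) :
    Continuous (jacobiAngularDensity α β) := by
  unfold jacobiAngularDensity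
  fun_prop (disch := linarith)

theorem jacobiAngularDensity_nonneg (α β : ℝ) {θ : ℝ} (h0 : 0 ≤ θ) (hπ : θ ≤ π) :
    0 ≤ jacobiAngularDensity α β θ := by
  have hu : 0 ≤ sin (θ / 2) := sin_nonneg_of_nonneg_of_le_pi (by linarith) (by linarith)
  have hv : 0 ≤ cos (θ / 2) := cos_nonneg_of_mem_Icc ⟨by linarith, by linarith⟩
  unfold jacobiAngularDensity
  positivity

theorem jacobiAngularDensity_le {α β : ℝ} (hα : -(1 / 2) ≤ α) (hβ : -(1 / 2) ≤ β) {θ : ℝ}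
    (h0 : 0 ≤ θ) (hπ : θ ≤ π) :
    jacobiAngularDensity α β θ ≤ 2 ^ (α + β + 1) * (θ / 2) ^ (2 * α + 1) := by
  have hu : 0 ≤ sin (θ / 2) := sin_nonneg_of_nonneg_of_le_pi (by linarith) (by linarith)
  have hv : 0 ≤ cos (θ / 2) := cos_nonneg_of_mem_Icc ⟨by linarith, by linarith⟩
  rw [jacobiAngularDensity, ← mul_one ((θ / 2) ^ (2 * α + 1))]
  gcongr
  · linarith
  · exact sin_le (by linarith)
  · exact rpow_le_one hv (cos_le_one _) (by linarith)

theorem le_jacobiAngularDensity {α β : ℝ} (hα : -(1 / 2) ≤ α) (hβ : -(1 / 2) ≤ β) {θ : ℝ}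
    (h0 : 0 ≤ θ) (h : θ ≤ 3 * π / 4) :
    2 ^ (α + β + 1) * ((θ / π) ^ (2 * α + 1) * cos (3 * π / 8) ^ (2 * β + 1)) ≤
      jacobiAngularDensity α β θ := by
  have hc : 0 < cos (3 * π / 8) := cos_pos_of_mem_Ioo ⟨by linarith [pi_pos], by linarith [pi_pos]⟩
  have hsin : θ / π ≤ sin (θ / 2) := by
    convert mul_le_sin (x := θ / 2) (by linarith) (by linarith) using 1
    field_simp
  have hcos : cos (3 * π / 8) ≤ cos (θ / 2) :=
    cos_le_cos_of_nonneg_of_le_pi (by linarith) (by linarith [pi_pos]) (by linarith)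
  have hu : 0 ≤ sin (θ / 2) := (div_nonneg h0 pi_pos.le).trans hsin
  unfold jacobiAngularDensity
  gcongr <;> linarith

theorem arcBall_eq_image_cos (y δ : ℝ) :
    arcBall y δ = cos '' (Icc 0 π ∩ Ioo (arccos y - δ) (arccos y + δ)) := by
  ext x
  constructor
  · rintro ⟨hx, hxy⟩
    rw [abs_lt] at hxy
    exact ⟨arccos x, ⟨⟨arccos_nonneg x, arccos_le_pi x⟩, by constructor <;> linarith⟩,
      cos_arccos hx.1 hx.2⟩
  · rintro ⟨θ, ⟨hθ, hθy⟩, rfl⟩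
    refine ⟨⟨neg_one_le_cos θ, cos_le_one θ⟩, ?_⟩
    rw [arccos_cos hθ.1 hθ.2, abs_lt]
    constructor <;> linarith [hθy.1, hθy.2]

theorem setIntegral_arcBall_eq (α β y δ : ℝ) :
    ∫ t in arcBall y δ, jacobiWeight α β t =
      ∫ θ in Icc 0 π ∩ Ioo (arccos y - δ) (arccos y + δ), jacobiAngularDensity α β θ := by
  have hT : MeasurableSet (Icc 0 π ∩ Ioo (arccos y - δ) (arccos y + δ)) :=
    measurableSet_Icc.inter measurableSet_Ioo
  rw [arcBall_eq_image_cos, integral_image_eq_integral_abs_deriv_smul hT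
    (fun θ _ => (hasDerivAt_cos θ).hasDerivWithinAt) (injOn_cos.mono inter_subset_left)]
  refine setIntegral_congr_ae hT ?_
  filter_upwards [(Ioo_ae_eq_Icc (μ := volume) (a := 0) (b := π)).mem_iff] with θ hIoo hθ
  obtain ⟨h0, hπ⟩ := hIoo.2 hθ.1
  rw [smul_eq_mul, abs_neg, abs_of_pos (sin_pos_of_pos_of_lt_pi h0 hπ)]
  exact sin_mul_jacobiWeight_cos α β h0 hπ

theorem neg_preimage_arcBall_neg (y δ : ℝ) : Neg.neg ⁻¹' arcBall (-y) δ = arcBall y δ := by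
  ext x
  simp only [arcBall, mem_preimage, mem_ofPred_eq, mem_Icc, arccos_neg]
  rw [show π - arccos x - (π - arccos y) = -(arccos x - arccos y) by ring, abs_neg]
  constructor <;> rintro ⟨⟨h1, h2⟩, h⟩ <;> exact ⟨⟨by linarith, by linarith⟩, h⟩

theorem setIntegral_arcBall_neg (α β y δ : ℝ) :
    ∫ t in arcBall (-y) δ, jacobiWeight β α t = ∫ t in arcBall y δ, jacobiWeight α β t := by
  rw [← (Measure.measurePreserving_neg volume).setIntegral_preimage_emb
    (Homeomorph.neg ℝ).measurableEmbedding, neg_preimage_arcBall_neg]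
  simp only [jacobiWeight, sub_neg_eq_add, ← sub_eq_add_neg, mul_comm]


theorem setIntegral_jacobiAngularDensity_le {α β : ℝ} (hα : -(1 / 2) ≤ α) (hβ : -(1 / 2) ≤ β) :
    ∃ c, 0 < c ∧ ∀ φ ∈ Icc 0 (π / 2), ∀ δ, 0 ≤ δ →
      ∫ θ in Icc 0 π ∩ Ioo (φ - δ) (φ + δ), jacobiAngularDensity α β θ ≤
        c * (δ * (sin φ + δ) ^ (2 * α + 1)) := by
  refine ⟨2 * 2 ^ (α + β + 1) * (π / 4) ^ (2 * α + 1), by positivity, ?_⟩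
  rintro φ ⟨hφ0, hφ⟩ δ hδ
  have hsin : 0 ≤ sin φ := sin_nonneg_of_nonneg_of_le_pi hφ0 (by linarith)
  have hjordan : φ ≤ π / 2 * sin φ := by
    have := mul_le_sin hφ0 hφ
    field_simp at this ⊢
    linarith
  have hT : volume (Icc 0 π ∩ Ioo (φ - δ) (φ + δ)) ≠ ⊤ :=
    (measure_mono inter_subset_left |>.trans_lt measure_Icc_lt_top).ne
  have hM : ∀ θ ∈ Icc 0 π ∩ Ioo (φ - δ) (φ + δ),
      jacobiAngularDensity α β θ ≤ 2 ^ (α + β + 1) * (π / 4 * (sin φ + δ)) ^ (2 * α + 1) := by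
    rintro θ ⟨⟨h0, hπ⟩, -, hθ⟩
    refine (jacobiAngularDensity_le hα hβ h0 hπ).trans ?_
    gcongr
    · linarith
    · nlinarith [mul_nonneg (by linarith [pi_gt_three] : (0:ℝ) ≤ π - 2) hδ]
  have hvol : volume.real (Icc 0 π ∩ Ioo (φ - δ) (φ + δ)) ≤ 2 * δ :=
    calc _ ≤ volume.real (Ioo (φ - δ) (φ + δ)) := measureReal_mono inter_subset_right measure_Ioo_lt_top.ne
      _ = 2 * δ := by rw [volume_real_Ioo_of_le (by linarith)]; ring
  calc _ ≤ ∫ _ in Icc 0 π ∩ Ioo (φ - δ) (φ + δ), 2 ^ (α + β + 1) * (π / 4 * (sin φ + δ)) ^ (2 * α + 1) :=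
        setIntegral_mono_on ((continuous_jacobiAngularDensity hα hβ).integrableOn_Icc.mono_set
          inter_subset_left) (integrableOn_const hT) (measurableSet_Icc.inter measurableSet_Ioo) hM
    _ ≤ 2 * δ * (2 ^ (α + β + 1) * (π / 4 * (sin φ + δ)) ^ (2 * α + 1)) := by
        rw [setIntegral_const, smul_eq_mul]; gcongr
    _ = _ := by rw [mul_rpow (by positivity) (by positivity)]; ring

theorem le_setIntegral_jacobiAngularDensity {α β : ℝ} (hα : -(1 / 2) ≤ α) (hβ : -(1 / 2) ≤ β) :
    ∃ c, 0 < c ∧ ∀ φ ∈ Icc 0 (π / 2), ∀ δ, 0 < δ → δ ≤ π →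
      c * (δ * (sin φ + δ) ^ (2 * α + 1)) ≤
        ∫ θ in Icc 0 π ∩ Ioo (φ - δ) (φ + δ), jacobiAngularDensity α β θ := by
  have hc : 0 < cos (3 * π / 8) := cos_pos_of_mem_Ioo ⟨by linarith [pi_pos], by linarith [pi_pos]⟩
  refine ⟨2 ^ (α + β + 1) * cos (3 * π / 8) ^ (2 * β + 1) / (8 * (8 * π) ^ (2 * α + 1)),
    by positivity, ?_⟩
  rintro φ ⟨hφ0, hφ⟩ δ hδ0 hδ
  have hsin : 0 ≤ sin φ := sin_nonneg_of_nonneg_of_le_pi hφ0 (by linarith)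
  have hJ : Ioo (φ + δ / 8) (φ + δ / 4) ⊆ Icc 0 π ∩ Ioo (φ - δ) (φ + δ) := fun θ ⟨h1, h2⟩ =>
    ⟨⟨by linarith, by linarith⟩, by linarith, by linarith⟩
  have hm : ∀ θ ∈ Ioo (φ + δ / 8) (φ + δ / 4), 2 ^ (α + β + 1) *
      (((sin φ + δ) / (8 * π)) ^ (2 * α + 1) * cos (3 * π / 8) ^ (2 * β + 1)) ≤
        jacobiAngularDensity α β θ := by
    rintro θ ⟨h1, h2⟩
    refine le_trans ?_ (le_jacobiAngularDensity hα hβ (by linarith) (by linarith))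
    have : (sin φ + δ) / (8 * π) ≤ θ / π := by
      rw [div_le_div_iff₀ (by positivity) pi_pos]
      nlinarith [pi_pos, sin_le hφ0]
    gcongr
    linarith
  have hint : IntegrableOn (jacobiAngularDensity α β) (Icc 0 π ∩ Ioo (φ - δ) (φ + δ)) :=
    (continuous_jacobiAngularDensity hα hβ).integrableOn_Icc.mono_set inter_subset_left
  calc _ = 2 ^ (α + β + 1) * (((sin φ + δ) / (8 * π)) ^ (2 * α + 1) *
        cos (3 * π / 8) ^ (2 * β + 1)) * volume.real (Ioo (φ + δ / 8) (φ + δ / 4)) := by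
        rw [volume_real_Ioo_of_le (by linarith), div_rpow (by positivity) (by positivity)]
        ring
    _ ≤ ∫ θ in Ioo (φ + δ / 8) (φ + δ / 4), jacobiAngularDensity α β θ :=
        setIntegral_ge_of_const_le_real measurableSet_Ioo measure_Ioo_lt_top.ne hm
          (hint.mono_set hJ)
    _ ≤ _ := setIntegral_mono_set hint
        ((ae_restrict_iff' (measurableSet_Icc.inter measurableSet_Ioo)).2
          (ae_of_all _ fun θ hθ => jacobiAngularDensity_nonneg α β hθ.1.1 hθ.1.2))
        hJ.eventuallyLE

theorem setIntegral_arcBall_comparable_of_nonneg {α β : ℝ} (hα : -(1 / 2) ≤ α)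
    (hβ : -(1 / 2) ≤ β) :
    ∃ c₁, 0 < c₁ ∧ ∃ c₂, 0 < c₂ ∧ ∀ y ∈ Icc (0 : ℝ) 1, ∀ δ, 0 < δ → δ ≤ π →
      c₁ * (δ * (√(1 - y ^ 2) + δ) ^ (2 * α + 1)) ≤ ∫ t in arcBall y δ, jacobiWeight α β t ∧
        ∫ t in arcBall y δ, jacobiWeight α β t ≤ c₂ * (δ * (√(1 - y ^ 2) + δ) ^ (2 * α + 1)) := by
  obtain ⟨c₁, hc₁, hlower⟩ := le_setIntegral_jacobiAngularDensity hα hβ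
  obtain ⟨c₂, hc₂, hupper⟩ := setIntegral_jacobiAngularDensity_le hα hβ
  refine ⟨c₁, hc₁, c₂, hc₂, fun y hy δ hδ hδπ => ?_⟩
  have hφ : arccos y ∈ Icc 0 (π / 2) := ⟨arccos_nonneg y, arccos_le_pi_div_two.2 hy.1⟩
  rw [setIntegral_arcBall_eq, ← sin_arccos]
  exact ⟨hlower _ hφ δ hδ hδπ, hupper _ hφ δ hδ.le⟩

end JacobiArcBall

open JacobiArcBall in
/-- For the Jacobi measure `dμ = (1-t)^α(1+t)^β dt` on `[-1,1]` with `α, β ≥ -1/2`,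
the measure of the arc-ball `B(y,δ) = {x ∈ [-1,1] : |arccos x - arccos y| < δ}` is
comparable to `δ(√(1-y²)+δ)^{2γ+1}` where `γ = α` if `y ≥ 0` and `γ = β` if `y < 0`. -/
theorem stmt17 (α β : ℝ) (hα : -(1/2 : ℝ) ≤ α) (hβ : -(1/2 : ℝ) ≤ β) :
    ∃ c₁ : ℝ, 0 < c₁ ∧ ∃ c₂ : ℝ, 0 < c₂ ∧
      ∀ y ∈ Icc (-1 : ℝ) 1, ∀ δ : ℝ, 0 < δ → δ ≤ π →
        c₁ * (δ * (Real.sqrt (1 - y ^ 2) + δ) ^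
            (2 * (if 0 ≤ y then α else β) + 1)) ≤
          (∫ t in {x : ℝ | x ∈ Icc (-1 : ℝ) 1 ∧
              |Real.arccos x - Real.arccos y| < δ}, (1 - t) ^ α * (1 + t) ^ β) ∧
        (∫ t in {x : ℝ | x ∈ Icc (-1 : ℝ) 1 ∧
              |Real.arccos x - Real.arccos y| < δ}, (1 - t) ^ α * (1 + t) ^ β) ≤
          c₂ * (δ * (Real.sqrt (1 - y ^ 2) + δ) ^
            (2 * (if 0 ≤ y then α else β) + 1)) := by
  obtain ⟨a₁, ha₁, a₂, ha₂, hαβ⟩ := setIntegral_arcBall_comparable_of_nonneg hα hβ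
  obtain ⟨b₁, hb₁, b₂, hb₂, hβα⟩ := setIntegral_arcBall_comparable_of_nonneg hβ hα
  refine ⟨min a₁ b₁, lt_min ha₁ hb₁, max a₂ b₂, ha₂.trans_le (le_max_left _ _),
    fun y hy δ hδ hδπ => ?_⟩
  change _ ≤ ∫ t in arcBall y δ, jacobiWeight α β t ∧ ∫ t in arcBall y δ, jacobiWeight α β t ≤ _
  split_ifs with hy0
  · obtain ⟨h₁, h₂⟩ := hαβ y ⟨hy0, hy.2⟩ δ hδ hδπ
    exact ⟨le_trans (by gcongr; exact min_le_left _ _) h₁,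
      h₂.trans (by gcongr; exact le_max_left _ _)⟩
  · obtain ⟨h₁, h₂⟩ := hβα (-y) ⟨by linarith, by linarith [hy.1]⟩ δ hδ hδπ
    rw [neg_sq, setIntegral_arcBall_neg] at h₁ h₂
    exact ⟨le_trans (by gcongr; exact min_le_right _ _) h₁,
      h₂.trans (by gcongr; exact le_max_right _ _)⟩
end

section
/- Let α, β ≥ −1/2 and μ the measure on [−1,1]^d with density ∏_i (1−x_i)^{α_i}(1+x_i)^{β_i}. Then μ is doubling with respect to the distance ρ(x,y) = max_i |arccos x_i − arccos y_i|: there is C = C(α,β,d) with μ(B(y,2δ)) ≤ C·μ(B(y,δ)) for all y ∈ [−1,1]^d and 0 < δ ≤ π/2. -/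
/-!
The ball `B(y, δ)` is the product of the one-dimensional balls
`{x ∈ [-1, 1] : |arccos x - arccos yᵢ| < δ}` and the weight is a product, so by Fubini its
measure is a product of one-dimensional measures and it suffices to treat `d = 1`.
Substituting `x = cos θ` turns the one-dimensional ball into `[0, π] ∩ (t - δ, t + δ)` with
`t = arccos y`, and `(1 - x)^a (1 + x)^b dx` into `2^(a+b+1) sin(θ/2)^(2a+1) cos(θ/2)^(2b+1) dθ`.
As `θ/π ≤ sin(θ/2) ≤ θ/2`, this density is comparable to `θ^A (π - θ)^B` with
`A = 2a + 1 ≥ 0`, `B = 2b + 1 ≥ 0`, and comparable densities have comparable doubling constants.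
For the model weight, the reflection `θ ↦ π - θ` reduces to `t ≤ π/2`; then it is at most
`(t + 2δ)^A π^B` on the large interval, of length at most `4δ`, and at least
`((t + 2δ)/8)^A (π/8)^B` on `[t + δ/4, t + δ/2]`, which lies in the small one.
-/

open Real Set MeasureTheory Finset

namespace JacobiDoubling

def angleBall (t δ : ℝ) : Set ℝ := Icc 0 π ∩ Ioo (t - δ) (t + δ)

noncomputable def modelWeight (A B θ : ℝ) : ℝ := θ ^ A * (π - θ) ^ B

lemma measurableSet_angleBall (t δ : ℝ) : MeasurableSet (angleBall t δ) :=
  measurableSet_Icc.inter measurableSet_Ioo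

lemma angleBall_subset_Icc (t δ : ℝ) : angleBall t δ ⊆ Icc 0 π := inter_subset_left

section ModelWeight

variable {A B : ℝ}

lemma modelWeight_nonneg (A B : ℝ) {θ : ℝ} (hθ : θ ∈ Icc 0 π) : 0 ≤ modelWeight A B θ :=
  mul_nonneg (rpow_nonneg hθ.1 _) (rpow_nonneg (sub_nonneg.2 hθ.2) _)

lemma integrableOn_modelWeight (hA : 0 ≤ A) (hB : 0 ≤ B) {s : Set ℝ} (hs : s ⊆ Icc 0 π) :
    IntegrableOn (modelWeight A B) s := by
  have : Continuous (modelWeight A B) :=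
    (continuous_rpow_const hA).mul ((continuous_rpow_const hB).comp (continuous_sub_left π))
  exact this.integrableOn_Icc.mono_set hs

lemma setIntegral_angleBall_modelWeight_le (hA : 0 ≤ A) (hB : 0 ≤ B) {t δ : ℝ} (ht : 0 ≤ t)
    (hδ : 0 ≤ δ) :
    ∫ θ in angleBall t δ, modelWeight A B θ ≤ (t + δ) ^ A * π ^ B * (2 * δ) := by
  have hbound : ∀ θ ∈ angleBall t δ, ‖modelWeight A B θ‖ ≤ (t + δ) ^ A * π ^ B := by
    rintro θ ⟨⟨h0, hπ⟩, -, hlt⟩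
    rw [Real.norm_of_nonneg (modelWeight_nonneg A B ⟨h0, hπ⟩)]
    exact mul_le_mul (rpow_le_rpow h0 hlt.le hA) (rpow_le_rpow (by linarith) (by linarith) hB)
      (rpow_nonneg (by linarith) _) (rpow_nonneg (by linarith) _)
  have hvol : volume.real (angleBall t δ) ≤ 2 * δ := by
    calc volume.real (angleBall t δ) ≤ volume.real (Ioo (t - δ) (t + δ)) :=
          measureReal_mono inter_subset_right (by simp)
      _ = 2 * δ := by rw [Real.volume_real_Ioo_of_le (by linarith)]; ring
  calc ∫ θ in angleBall t δ, modelWeight A B θ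
      ≤ ‖∫ θ in angleBall t δ, modelWeight A B θ‖ := le_norm_self _
    _ ≤ (t + δ) ^ A * π ^ B * volume.real (angleBall t δ) :=
        norm_setIntegral_le_of_norm_le_const
          ((measure_mono inter_subset_right).trans_lt measure_Ioo_lt_top) hbound
    _ ≤ (t + δ) ^ A * π ^ B * (2 * δ) := by gcongr

lemma le_setIntegral_angleBall_modelWeight (hA : 0 ≤ A) (hB : 0 ≤ B) {t δ : ℝ} (ht0 : 0 ≤ t)
    (ht : t ≤ π / 2) (hδ : 0 < δ) (hδπ : δ ≤ π / 2) :
    ((t + 2 * δ) / 8) ^ A * (π / 8) ^ B * (δ / 4) ≤ ∫ θ in angleBall t δ, modelWeight A B θ := by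
  have hK : Icc (t + δ / 4) (t + δ / 2) ⊆ angleBall t δ := fun θ hθ =>
    ⟨⟨by linarith [hθ.1], by linarith [hθ.2, pi_pos]⟩, by linarith [hθ.1], by linarith [hθ.2]⟩
  have hbound : ∀ θ ∈ Icc (t + δ / 4) (t + δ / 2),
      ((t + 2 * δ) / 8) ^ A * (π / 8) ^ B ≤ modelWeight A B θ := fun θ hθ =>
    mul_le_mul (rpow_le_rpow (by positivity) (by linarith [hθ.1]) hA)
      (rpow_le_rpow (by positivity) (by linarith [hθ.2]) hB)
      (rpow_nonneg (by positivity) _) (rpow_nonneg (by linarith [hθ.1]) _)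
  calc ((t + 2 * δ) / 8) ^ A * (π / 8) ^ B * (δ / 4)
      = ((t + 2 * δ) / 8) ^ A * (π / 8) ^ B * volume.real (Icc (t + δ / 4) (t + δ / 2)) := by
        rw [Real.volume_real_Icc_of_le (by linarith)]; ring
    _ ≤ ∫ θ in Icc (t + δ / 4) (t + δ / 2), modelWeight A B θ :=
        setIntegral_ge_of_const_le_real measurableSet_Icc (by simp) hbound
          (integrableOn_modelWeight hA hB (hK.trans (angleBall_subset_Icc t δ)))
    _ ≤ ∫ θ in angleBall t δ, modelWeight A B θ :=
        setIntegral_mono_set (integrableOn_modelWeight hA hB (angleBall_subset_Icc t δ))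
          ((ae_restrict_mem (measurableSet_angleBall t δ)).mono fun θ hθ =>
            modelWeight_nonneg A B hθ.1)
          hK.eventuallyLE

lemma modelWeight_doubling_of_le_pi_div_two (hA : 0 ≤ A) (hB : 0 ≤ B) {t δ : ℝ} (ht0 : 0 ≤ t)
    (ht : t ≤ π / 2) (hδ : 0 < δ) (hδπ : δ ≤ π / 2) :
    ∫ θ in angleBall t (2 * δ), modelWeight A B θ ≤
      16 * 8 ^ A * 8 ^ B * ∫ θ in angleBall t δ, modelWeight A B θ := by
  calc ∫ θ in angleBall t (2 * δ), modelWeight A B θ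
      ≤ (t + 2 * δ) ^ A * π ^ B * (2 * (2 * δ)) :=
        setIntegral_angleBall_modelWeight_le hA hB ht0 (by linarith)
    _ = 16 * 8 ^ A * 8 ^ B * (((t + 2 * δ) / 8) ^ A * (π / 8) ^ B * (δ / 4)) := by
        rw [div_rpow (by linarith) (by norm_num), div_rpow pi_pos.le (by norm_num)]
        field_simp
        ring
    _ ≤ 16 * 8 ^ A * 8 ^ B * ∫ θ in angleBall t δ, modelWeight A B θ := by
        gcongr
        exact le_setIntegral_angleBall_modelWeight hA hB ht0 ht hδ hδπ

lemma setIntegral_angleBall_modelWeight_reflect (A B t δ : ℝ) :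
    ∫ θ in angleBall t δ, modelWeight A B θ = ∫ θ in angleBall (π - t) δ, modelWeight B A θ := by
  have hpre : (fun θ => π - θ) ⁻¹' angleBall t δ = angleBall (π - t) δ := by
    ext θ
    simp only [angleBall, Set.mem_preimage, mem_inter_iff, Set.mem_Icc, Set.mem_Ioo]
    constructor <;> rintro ⟨⟨_, _⟩, _, _⟩ <;> refine ⟨⟨?_, ?_⟩, ?_, ?_⟩ <;> linarith
  rw [← (Measure.measurePreserving_sub_left volume π).setIntegral_preimage_emb
    (measurableEmbedding_subLeft π), hpre]
  refine setIntegral_congr_fun (measurableSet_angleBall _ _) fun θ _ => ?_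
  simp only [modelWeight, sub_sub_cancel, mul_comm]

lemma modelWeight_doubling (hA : 0 ≤ A) (hB : 0 ≤ B) {t δ : ℝ} (ht : t ∈ Icc 0 π)
    (hδ : 0 < δ) (hδπ : δ ≤ π / 2) :
    ∫ θ in angleBall t (2 * δ), modelWeight A B θ ≤
      16 * 8 ^ A * 8 ^ B * ∫ θ in angleBall t δ, modelWeight A B θ := by
  rcases le_or_gt t (π / 2) with hle | hgt
  · exact modelWeight_doubling_of_le_pi_div_two hA hB ht.1 hle hδ hδπ
  · rw [setIntegral_angleBall_modelWeight_reflect A B t,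
      setIntegral_angleBall_modelWeight_reflect A B t, mul_right_comm _ (8 ^ A)]
    exact modelWeight_doubling_of_le_pi_div_two (t := π - t) hB hA (by linarith [ht.2])
      (by linarith) hδ hδπ

end ModelWeight

theorem setIntegral_le_mul_setIntegral_of_comparable {X : Type*} [MeasurableSpace X]
    {μ : Measure X} {U S T : Set X} {p w : X → ℝ} {c₁ c₂ C : ℝ} (hc₁ : 0 < c₁) (hc₂ : 0 ≤ c₂)
    (hC : 0 ≤ C) (hS : S ⊆ U) (hT : T ⊆ U) (hp : IntegrableOn p U μ) (hw : IntegrableOn w U μ)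
    (hcomp : ∀ᵐ x ∂μ.restrict U, c₁ * p x ≤ w x ∧ w x ≤ c₂ * p x)
    (hdbl : ∫ x in S, p x ∂μ ≤ C * ∫ x in T, p x ∂μ) :
    ∫ x in S, w x ∂μ ≤ c₂ * C / c₁ * ∫ x in T, w x ∂μ := by
  have hup : ∫ x in S, w x ∂μ ≤ c₂ * ∫ x in S, p x ∂μ := by
    rw [← integral_const_mul]
    exact setIntegral_mono_ae_restrict (hw.mono_set hS) ((hp.mono_set hS).const_mul c₂)
      ((ae_restrict_of_ae_restrict_of_subset hS hcomp).mono fun x hx => hx.2)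
  have hlow : c₁ * ∫ x in T, p x ∂μ ≤ ∫ x in T, w x ∂μ := by
    rw [← integral_const_mul]
    exact setIntegral_mono_ae_restrict ((hp.mono_set hT).const_mul c₁) (hw.mono_set hT)
      ((ae_restrict_of_ae_restrict_of_subset hT hcomp).mono fun x hx => hx.1)
  calc ∫ x in S, w x ∂μ ≤ c₂ * ∫ x in S, p x ∂μ := hup
    _ ≤ c₂ * (C * ∫ x in T, p x ∂μ) := by gcongr
    _ = c₂ * C / c₁ * (c₁ * ∫ x in T, p x ∂μ) := by field_simp
    _ ≤ c₂ * C / c₁ * ∫ x in T, w x ∂μ := by gcongr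

noncomputable def jacobiWeight (a b x : ℝ) : ℝ := (1 - x) ^ a * (1 + x) ^ b

lemma sin_mul_jacobiWeight_cos (a b : ℝ) {θ : ℝ} (hθ : θ ∈ Ioo 0 π) :
    sin θ * jacobiWeight a b (cos θ) =
      2 ^ (a + b + 1) * (sin (θ / 2) ^ (2 * a + 1) * cos (θ / 2) ^ (2 * b + 1)) := by
  have hs : 0 < sin (θ / 2) :=
    sin_pos_of_pos_of_lt_pi (by linarith [hθ.1]) (by linarith [hθ.2, pi_pos])
  have hc : 0 < cos (θ / 2) :=
    cos_pos_of_mem_Ioo ⟨by linarith [hθ.1, pi_pos], by linarith [hθ.2]⟩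
  have hsq : ∀ {u : ℝ}, 0 < u → ∀ γ : ℝ, (2 * u ^ 2) ^ γ = 2 ^ γ * u ^ (2 * γ) := fun hu γ => by
    rw [mul_rpow two_pos.le (by positivity), ← rpow_natCast_mul hu.le]
    norm_num
  have hsin : sin θ = 2 * sin (θ / 2) * cos (θ / 2) := by rw [← sin_two_mul]; ring_nf
  have hcos : cos θ = 2 * cos (θ / 2) ^ 2 - 1 := by rw [← cos_two_mul]; ring_nf
  have h1 : 1 - cos θ = 2 * sin (θ / 2) ^ 2 := by
    linear_combination -hcos - 2 * sin_sq_add_cos_sq (θ / 2)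
  have h2 : 1 + cos θ = 2 * cos (θ / 2) ^ 2 := by linear_combination hcos
  rw [jacobiWeight, hsin, h1, h2, hsq hs, hsq hc, rpow_add_one hs.ne', rpow_add_one hc.ne',
    rpow_add_one two_ne_zero, rpow_add two_pos]
  ring

lemma sin_half_mem_Icc {θ : ℝ} (h0 : 0 ≤ θ) (hπ : θ ≤ π) : sin (θ / 2) ∈ Icc (θ / π) (θ / 2) :=
  ⟨calc θ / π = 2 / π * (θ / 2) := by ring
      _ ≤ sin (θ / 2) := mul_le_sin (by linarith) (by linarith),
    sin_le (by linarith)⟩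

lemma modelWeight_comparable_sin_half_rpow_mul_cos_half_rpow {A B : ℝ} (hA : 0 ≤ A)
    (hB : 0 ≤ B) {θ : ℝ} (hθ : θ ∈ Icc 0 π) :
    modelWeight A B θ / (π ^ A * π ^ B) ≤ sin (θ / 2) ^ A * cos (θ / 2) ^ B ∧
      sin (θ / 2) ^ A * cos (θ / 2) ^ B ≤ modelWeight A B θ / (2 ^ A * 2 ^ B) := by
  obtain ⟨h0, hπ⟩ := hθ
  have hs := sin_half_mem_Icc h0 hπ
  have hc : cos (θ / 2) ∈ Icc ((π - θ) / π) ((π - θ) / 2) := by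
    rw [← sin_pi_div_two_sub, show π / 2 - θ / 2 = (π - θ) / 2 by ring]
    exact sin_half_mem_Icc (by linarith) (by linarith)
  have hsplit : ∀ D : ℝ, 0 < D →
      modelWeight A B θ / (D ^ A * D ^ B) = (θ / D) ^ A * ((π - θ) / D) ^ B := fun D hD => by
    rw [div_rpow h0 hD.le, div_rpow (by linarith) hD.le, modelWeight]; field_simp
  have hs0 : 0 ≤ sin (θ / 2) := (div_nonneg h0 pi_pos.le).trans hs.1
  have hc0 : 0 ≤ cos (θ / 2) := (div_nonneg (sub_nonneg.2 hπ) pi_pos.le).trans hc.1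
  rw [hsplit π pi_pos, hsplit 2 two_pos]
  constructor
  · exact mul_le_mul (rpow_le_rpow (div_nonneg h0 pi_pos.le) hs.1 hA)
      (rpow_le_rpow (div_nonneg (sub_nonneg.2 hπ) pi_pos.le) hc.1 hB) (by positivity)
      (by positivity)
  · exact mul_le_mul (rpow_le_rpow hs0 hs.2 hA) (rpow_le_rpow hc0 hc.2 hB) (by positivity)
      (by positivity)

lemma sin_mul_jacobiWeight_cos_comparable {a b : ℝ} (ha : -(1 / 2) ≤ a) (hb : -(1 / 2) ≤ b) :
    ∃ c₁ c₂ : ℝ, 0 < c₁ ∧ 0 < c₂ ∧ ∀ᵐ θ ∂volume.restrict (Icc 0 π),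
      c₁ * modelWeight (2 * a + 1) (2 * b + 1) θ ≤ sin θ * jacobiWeight a b (cos θ) ∧
        sin θ * jacobiWeight a b (cos θ) ≤ c₂ * modelWeight (2 * a + 1) (2 * b + 1) θ := by
  set A := 2 * a + 1
  set B := 2 * b + 1
  refine ⟨2 ^ (a + b + 1) / (π ^ A * π ^ B), 2 ^ (a + b + 1) / (2 ^ A * 2 ^ B), by positivity,
    by positivity, ?_⟩
  rw [← Measure.restrict_congr_set Ioo_ae_eq_Icc]
  refine ae_restrict_of_forall_mem measurableSet_Ioo fun θ hθ => ?_
  obtain ⟨hlow, hup⟩ := modelWeight_comparable_sin_half_rpow_mul_cos_half_rpow (A := A) (B := B)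
    (by linarith) (by linarith) (Ioo_subset_Icc_self hθ)
  rw [sin_mul_jacobiWeight_cos a b hθ, div_mul_eq_mul_div, div_mul_eq_mul_div, mul_div_assoc,
    mul_div_assoc]
  exact ⟨by gcongr, by gcongr⟩

lemma angleBall_doubling_sin_mul_jacobiWeight_cos {a b : ℝ} (ha : -(1 / 2) ≤ a)
    (hb : -(1 / 2) ≤ b) :
    ∃ C : ℝ, 0 < C ∧ ∀ t ∈ Icc 0 π, ∀ δ : ℝ, 0 < δ → δ ≤ π / 2 →
      ∫ θ in angleBall t (2 * δ), sin θ * jacobiWeight a b (cos θ) ≤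
        C * ∫ θ in angleBall t δ, sin θ * jacobiWeight a b (cos θ) := by
  have hA : 0 ≤ 2 * a + 1 := by linarith
  have hB : 0 ≤ 2 * b + 1 := by linarith
  obtain ⟨c₁, c₂, hc₁, hc₂, hcomp⟩ := sin_mul_jacobiWeight_cos_comparable ha hb
  have hp := integrableOn_modelWeight hA hB subset_rfl
  have hw : IntegrableOn (fun θ => sin θ * jacobiWeight a b (cos θ)) (Icc 0 π) := by
    have hmeas : Measurable fun θ => sin θ * jacobiWeight a b (cos θ) := by
      unfold jacobiWeight; fun_prop
    refine Integrable.mono' (hp.const_mul c₂) hmeas.aestronglyMeasurable ?_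
    filter_upwards [hcomp, ae_restrict_mem measurableSet_Icc] with θ hθ hmem
    rw [norm_of_nonneg ((mul_nonneg hc₁.le (modelWeight_nonneg _ _ hmem)).trans hθ.1)]
    exact hθ.2
  refine ⟨c₂ * (16 * 8 ^ (2 * a + 1) * 8 ^ (2 * b + 1)) / c₁, by positivity,
    fun t ht δ hδ hδπ => ?_⟩
  exact setIntegral_le_mul_setIntegral_of_comparable hc₁ hc₂.le (by positivity)
    (angleBall_subset_Icc _ _) (angleBall_subset_Icc _ _) hp hw hcomp
    (modelWeight_doubling hA hB ht hδ hδπ)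

def arccosBall (y δ : ℝ) : Set ℝ := {x | x ∈ Set.Icc (-1) 1 ∧ |arccos x - arccos y| < δ}

lemma measurableSet_arccosBall (y δ : ℝ) : MeasurableSet (arccosBall y δ) :=
  measurableSet_Icc.inter
    (measurableSet_lt (continuous_arccos.sub continuous_const).abs.measurable measurable_const)

lemma arccosBall_eq_image_cos (y δ : ℝ) : arccosBall y δ = cos '' angleBall (arccos y) δ := by
  ext x
  constructor
  · rintro ⟨⟨hx₁, hx₂⟩, hlt⟩
    obtain ⟨hlt₁, hlt₂⟩ := abs_lt.mp hlt
    exact ⟨arccos x, ⟨⟨arccos_nonneg x, arccos_le_pi x⟩, by linarith, by linarith⟩,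
      cos_arccos hx₁ hx₂⟩
  · rintro ⟨θ, ⟨⟨h0, hπ⟩, h₁, h₂⟩, rfl⟩
    refine ⟨⟨neg_one_le_cos θ, cos_le_one θ⟩, ?_⟩
    rw [arccos_cos h0 hπ]
    exact abs_lt.mpr ⟨by linarith, by linarith⟩

lemma setIntegral_image_cos (f : ℝ → ℝ) {s : Set ℝ} (hs : s ⊆ Icc 0 π) (hsm : MeasurableSet s) :
    ∫ x in cos '' s, f x = ∫ θ in s, sin θ * f (cos θ) := by
  rw [integral_image_eq_integral_abs_deriv_smul hsm
    (fun θ _ => (hasDerivAt_cos θ).hasDerivWithinAt) (injOn_cos.mono hs)]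
  refine setIntegral_congr_fun hsm fun θ hθ => ?_
  rw [abs_neg, abs_of_nonneg (sin_nonneg_of_nonneg_of_le_pi (hs hθ).1 (hs hθ).2), smul_eq_mul]

lemma arccosBall_doubling_jacobiWeight {a b : ℝ} (ha : -(1 / 2) ≤ a) (hb : -(1 / 2) ≤ b) :
    ∃ C : ℝ, 0 < C ∧ ∀ y δ : ℝ, 0 < δ → δ ≤ π / 2 →
      ∫ x in arccosBall y (2 * δ), jacobiWeight a b x ≤
        C * ∫ x in arccosBall y δ, jacobiWeight a b x := by
  obtain ⟨C, hC, hdbl⟩ := angleBall_doubling_sin_mul_jacobiWeight_cos ha hb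
  refine ⟨C, hC, fun y δ hδ hδπ => ?_⟩
  simp only [arccosBall_eq_image_cos,
    setIntegral_image_cos _ (angleBall_subset_Icc _ _) (measurableSet_angleBall _ _)]
  exact hdbl _ ⟨arccos_nonneg y, arccos_le_pi y⟩ δ hδ hδπ

lemma setIntegral_arccosBall_jacobiWeight_nonneg (a b y δ : ℝ) :
    0 ≤ ∫ x in arccosBall y δ, jacobiWeight a b x :=
  setIntegral_nonneg (measurableSet_arccosBall y δ) fun _ ⟨⟨hx₁, hx₂⟩, _⟩ =>
    mul_nonneg (rpow_nonneg (by linarith) _) (rpow_nonneg (by linarith) _)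

theorem setIntegral_univ_pi_prod {ι 𝕜 : Type*} [Fintype ι] [RCLike 𝕜] {E : ι → Type*}
    [∀ i, MeasureSpace (E i)] [∀ i, SigmaFinite (volume : Measure (E i))]
    (f : ∀ i, E i → 𝕜) (S : ∀ i, Set (E i)) :
    ∫ x in univ.pi S, ∏ i, f i (x i) = ∏ i, ∫ u in S i, f i u := by
  rw [volume_pi, Measure.restrict_pi_pi]
  exact integral_fintype_prod_eq_prod f

lemma setOf_arccos_box_eq_univ_pi {ι : Type*} (y : ι → ℝ) (r : ℝ) :
    {x : ι → ℝ | (∀ i, x i ∈ Icc (-1 : ℝ) 1) ∧ ∀ i, |arccos (x i) - arccos (y i)| < r} =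
      univ.pi fun i => arccosBall (y i) r := by
  ext x
  simp only [Set.mem_ofPred_eq, Set.mem_univ_pi, arccosBall, forall_and]

end JacobiDoubling

open JacobiDoubling

/-- The product Jacobi measure on `[-1,1]^d` is doubling for the distance
`ρ(x,y) = max_i |arccos x_i - arccos y_i|`:
`μ(B(y,2δ)) ≤ C μ(B(y,δ))` for `0 < δ ≤ π/2`. -/
theorem stmt18 (d : ℕ) (α β : Fin d → ℝ)
    (hα : ∀ i, -(1/2 : ℝ) ≤ α i) (hβ : ∀ i, -(1/2 : ℝ) ≤ β i) :
    ∃ C : ℝ, 0 < C ∧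
      ∀ y : Fin d → ℝ, (∀ i, y i ∈ Icc (-1 : ℝ) 1) →
        ∀ δ : ℝ, 0 < δ → δ ≤ π / 2 →
          (∫ x in {x : Fin d → ℝ | (∀ i, x i ∈ Icc (-1 : ℝ) 1) ∧
                ∀ i, |Real.arccos (x i) - Real.arccos (y i)| < 2 * δ},
              ∏ i : Fin d, (1 - x i) ^ (α i) * (1 + x i) ^ (β i)) ≤
          C * ∫ x in {x : Fin d → ℝ | (∀ i, x i ∈ Icc (-1 : ℝ) 1) ∧
                ∀ i, |Real.arccos (x i) - Real.arccos (y i)| < δ},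
              ∏ i : Fin d, (1 - x i) ^ (α i) * (1 + x i) ^ (β i) := by
  choose C hC hdbl using fun i => arccosBall_doubling_jacobiWeight (hα i) (hβ i)
  refine ⟨∏ i, C i, prod_pos fun i _ => hC i, fun y _ δ hδ hδπ => ?_⟩
  rw [setOf_arccos_box_eq_univ_pi, setOf_arccos_box_eq_univ_pi,
    setIntegral_univ_pi_prod (fun i u => (1 - u) ^ α i * (1 + u) ^ β i),
    setIntegral_univ_pi_prod (fun i u => (1 - u) ^ α i * (1 + u) ^ β i), ← prod_mul_distrib]
  exact prod_le_prod (fun i _ => setIntegral_arccosBall_jacobiWeight_nonneg _ _ _ _)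
    fun i _ => hdbl i (y i) δ hδ hδπ
end

section
/- Let W(n;x) := ∏_{i=1}^d (1−x_i+n^{−2})^{α_i+1/2}(1+x_i+n^{−2})^{β_i+1/2} for x ∈ [−1,1]^d, with α_i, β_i ≥ −1/2, and ρ(x,y) := max_i |arccos x_i − arccos y_i|. Then there is c = c(α,β,d) such that for all x, y ∈ [−1,1]^d and n ≥ 1: W(n;x) ≤ c·W(n;y)·(1+n·ρ(x,y))^{d+2∑_i max(α_i,β_i)}. -/
open Real Set Finset


lemma abs_sin_sub_sin (a b : ℝ) : |Real.sin a - Real.sin b| ≤ |a - b| := by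
  rw [Real.sin_sub_sin, abs_mul, abs_mul]
  calc |(2:ℝ)| * |Real.sin ((a-b)/2)| * |Real.cos ((a+b)/2)|
      ≤ |(2:ℝ)| * |(a-b)/2| * 1 := by
        apply mul_le_mul (mul_le_mul le_rfl Real.abs_sin_le_abs (abs_nonneg _) (abs_nonneg _))
          (Real.abs_cos_le_one _) (abs_nonneg _) (by positivity)
    _ = |a - b| := by rw [abs_div]; simp [abs_of_nonneg]; ring
lemma abs_cos_sub_cos' (a b : ℝ) : |Real.cos a - Real.cos b| ≤ |a - b| := by
  rw [Real.cos_sub_cos, abs_mul, abs_mul]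
  calc |(-2:ℝ)| * |Real.sin ((a+b)/2)| * |Real.sin ((a-b)/2)|
      ≤ |(-2:ℝ)| * 1 * |(a-b)/2| := by
        apply mul_le_mul (mul_le_mul le_rfl (Real.abs_sin_le_one _) (abs_nonneg _) (abs_nonneg _))
          Real.abs_sin_le_abs (abs_nonneg _) (by positivity)
    _ = |a - b| := by rw [abs_div]; simp; ring

lemma alg_core (s t δ u : ℝ) (hs : 0 ≤ s) (ht : 0 ≤ t) (hδ : 0 ≤ δ) (hu : 0 < u)
    (h : s ≤ t + δ) : 2*s^2 + u^2 ≤ 4*(2*t^2 + u^2)*(1 + δ/u)^2 := by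
  have h1 : 1 + δ/u = (u + δ)/u := by field_simp
  rw [h1, div_pow]
  rw [← sub_nonneg]
  have key : 0 ≤ 4*(2*t^2+u^2)*(u+δ)^2 - (2*s^2+u^2)*u^2 := by
    have e1 : (2*s^2+u^2)*u^2 ≤ 2*((s+u)*u)^2 := by
      nlinarith [mul_nonneg hs hu.le, sq_nonneg u, mul_pos hu hu,
        mul_nonneg (mul_nonneg hs hu.le) (mul_pos hu hu).le]
    have e2 : (s+u)*u ≤ (t+u)*(u+δ) := by nlinarith [mul_nonneg ht hδ, mul_nonneg hδ hu.le]
    have e3 : ((s+u)*u)^2 ≤ ((t+u)*(u+δ))^2 := by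
      apply pow_le_pow_left₀ (by positivity) e2
    have e4 : 2*((t+u)*(u+δ))^2 ≤ 4*(2*t^2+u^2)*(u+δ)^2 := by
      have : (t+u)^2 ≤ 2*(2*t^2+u^2) := by nlinarith [sq_nonneg (t-u), sq_nonneg t]
      calc 2*((t+u)*(u+δ))^2 = 2*(t+u)^2*(u+δ)^2 := by ring
        _ ≤ 2*(2*(2*t^2+u^2))*(u+δ)^2 := by
            apply mul_le_mul_of_nonneg_right _ (sq_nonneg _)
            linarith
        _ = 4*(2*t^2+u^2)*(u+δ)^2 := by ring
    linarith
  calc (0:ℝ) ≤ (4*(2*t^2+u^2)*(u+δ)^2 - (2*s^2+u^2)*u^2)/u^2 := by positivity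
    _ = 4*(2*t^2+u^2)*((u+δ)^2/u^2) - (2*s^2+u^2) := by field_simp

lemma one_sided_minus (x y u : ℝ) (hx : x ∈ Set.Icc (-1:ℝ) 1) (hy : y ∈ Set.Icc (-1:ℝ) 1)
    (hu : 0 < u) :
    1 - x + u^2 ≤ 4*(1 - y + u^2)*(1 + |Real.arccos x - Real.arccos y|/u)^2 := by
  set a := Real.arccos x with ha
  set b := Real.arccos y with hb
  have hax : 1 - x = 2 * Real.sin (a/2)^2 := by
    have h1 : Real.sin (a/2)^2 = 1/2 - Real.cos (2*(a/2))/2 := Real.sin_sq_eq_half_sub _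
    have h2 : 2*(a/2) = a := by ring
    rw [h2] at h1
    rw [ha] at h1 ⊢
    rw [Real.cos_arccos hx.1 hx.2] at h1
    linarith
  have hby : 1 - y = 2 * Real.sin (b/2)^2 := by
    have h1 : Real.sin (b/2)^2 = 1/2 - Real.cos (2*(b/2))/2 := Real.sin_sq_eq_half_sub _
    have h2 : 2*(b/2) = b := by ring
    rw [h2] at h1
    rw [hb] at h1 ⊢
    rw [Real.cos_arccos hy.1 hy.2] at h1
    linarith
  have hs : 0 ≤ Real.sin (a/2) := by
    apply Real.sin_nonneg_of_nonneg_of_le_pi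
    · have := Real.arccos_nonneg x; rw [← ha] at this; linarith
    · have := Real.arccos_le_pi x; rw [← ha] at this; linarith [Real.pi_pos]
  have ht : 0 ≤ Real.sin (b/2) := by
    apply Real.sin_nonneg_of_nonneg_of_le_pi
    · have := Real.arccos_nonneg y; rw [← hb] at this; linarith
    · have := Real.arccos_le_pi y; rw [← hb] at this; linarith [Real.pi_pos]
  have hst : Real.sin (a/2) ≤ Real.sin (b/2) + |a - b| := by
    have h1 : |Real.sin (a/2) - Real.sin (b/2)| ≤ |a/2 - b/2| := abs_sin_sub_sin _ _
    have h2 : |a/2 - b/2| ≤ |a - b| := by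
      rw [show a/2 - b/2 = (a-b)/2 by ring, abs_div]
      simp only [abs_two]
      linarith [abs_nonneg (a-b)]
    have h3 := le_of_abs_le h1
    linarith
  have := alg_core (Real.sin (a/2)) (Real.sin (b/2)) (|a-b|) u hs ht (abs_nonneg _) hu hst
  calc 1 - x + u^2 = 2*Real.sin (a/2)^2 + u^2 := by rw [hax]
    _ ≤ 4*(2*Real.sin (b/2)^2 + u^2)*(1 + |a-b|/u)^2 := this
    _ = 4*(1 - y + u^2)*(1 + |a-b|/u)^2 := by rw [hby]

lemma one_sided_plus (x y u : ℝ) (hx : x ∈ Set.Icc (-1:ℝ) 1) (hy : y ∈ Set.Icc (-1:ℝ) 1)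
    (hu : 0 < u) :
    1 + x + u^2 ≤ 4*(1 + y + u^2)*(1 + |Real.arccos x - Real.arccos y|/u)^2 := by
  set a := Real.arccos x with ha
  set b := Real.arccos y with hb
  have hax : 1 + x = 2 * Real.cos (a/2)^2 := by
    have h1 : Real.cos (a/2)^2 = 1/2 + Real.cos (2*(a/2))/2 := Real.cos_sq _
    have h2 : 2*(a/2) = a := by ring
    rw [h2] at h1
    rw [ha] at h1 ⊢
    rw [Real.cos_arccos hx.1 hx.2] at h1
    linarith
  have hby : 1 + y = 2 * Real.cos (b/2)^2 := by
    have h1 : Real.cos (b/2)^2 = 1/2 + Real.cos (2*(b/2))/2 := Real.cos_sq _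
    have h2 : 2*(b/2) = b := by ring
    rw [h2] at h1
    rw [hb] at h1 ⊢
    rw [Real.cos_arccos hy.1 hy.2] at h1
    linarith
  have hs : 0 ≤ Real.cos (a/2) := by
    apply Real.cos_nonneg_of_mem_Icc
    constructor
    · have := Real.arccos_nonneg x; rw [← ha] at this; linarith [Real.pi_pos]
    · have := Real.arccos_le_pi x; rw [← ha] at this; linarith
  have ht : 0 ≤ Real.cos (b/2) := by
    apply Real.cos_nonneg_of_mem_Icc
    constructor
    · have := Real.arccos_nonneg y; rw [← hb] at this; linarith [Real.pi_pos]
    · have := Real.arccos_le_pi y; rw [← hb] at this; linarith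
  have hst : Real.cos (a/2) ≤ Real.cos (b/2) + |a - b| := by
    have h1 : |Real.cos (a/2) - Real.cos (b/2)| ≤ |a/2 - b/2| := abs_cos_sub_cos' _ _
    have h2 : |a/2 - b/2| ≤ |a - b| := by
      rw [show a/2 - b/2 = (a-b)/2 by ring, abs_div]
      simp only [abs_two]
      linarith [abs_nonneg (a-b)]
    have h3 := le_of_abs_le h1
    linarith
  have := alg_core (Real.cos (a/2)) (Real.cos (b/2)) (|a-b|) u hs ht (abs_nonneg _) hu hst
  calc 1 + x + u^2 = 2*Real.cos (a/2)^2 + u^2 := by rw [hax]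
    _ ≤ 4*(2*Real.cos (b/2)^2 + u^2)*(1 + |a-b|/u)^2 := this
    _ = 4*(1 + y + u^2)*(1 + |a-b|/u)^2 := by rw [hby]

lemma coord_bound (a b x y u K : ℝ) (ha : -(1/2:ℝ) ≤ a) (hb : -(1/2:ℝ) ≤ b)
    (hx : x ∈ Set.Icc (-1:ℝ) 1) (hy : y ∈ Set.Icc (-1:ℝ) 1) (hu : 0 < u) (hK1 : 1 ≤ K)
    (hK : 1 + |Real.arccos x - Real.arccos y|/u ≤ K) :
    (1 - x + u^2) ^ (a + 1/2) * (1 + x + u^2) ^ (b + 1/2) ≤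
      ((4:ℝ) ^ (a + 1/2) + 4 ^ (b + 1/2)) *
        ((1 - y + u^2) ^ (a + 1/2) * (1 + y + u^2) ^ (b + 1/2)) * K ^ (1 + 2 * max a b) := by
  have hK0 : (0:ℝ) ≤ K := by linarith
  have hδ0 : 0 ≤ 1 + |Real.arccos x - Real.arccos y|/u := by positivity
  have ha2 : (0:ℝ) ≤ a + 1/2 := by linarith
  have hb2 : (0:ℝ) ≤ b + 1/2 := by linarith
  have pxm : (0:ℝ) < 1 - x + u^2 := by nlinarith [hx.2, sq_nonneg u, sq_abs u, hu]
  have pxp : (0:ℝ) < 1 + x + u^2 := by nlinarith [hx.1]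
  have pym : (0:ℝ) < 1 - y + u^2 := by nlinarith [hy.2]
  have pyp : (0:ℝ) < 1 + y + u^2 := by nlinarith [hy.1]
  have hKsq : (1 + |Real.arccos x - Real.arccos y|/u)^2 ≤ K^2 := by
    apply pow_le_pow_left₀ hδ0 hK
  have hm : 1 - x + u^2 ≤ 4*(1 - y + u^2)*K^2 := by
    calc 1 - x + u^2 ≤ 4*(1 - y + u^2)*(1 + |Real.arccos x - Real.arccos y|/u)^2 :=
          one_sided_minus x y u hx hy hu
      _ ≤ 4*(1 - y + u^2)*K^2 := by
          apply mul_le_mul_of_nonneg_left hKsq (by positivity)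
  have hp : 1 + x + u^2 ≤ 4*(1 + y + u^2)*K^2 := by
    calc 1 + x + u^2 ≤ 4*(1 + y + u^2)*(1 + |Real.arccos x - Real.arccos y|/u)^2 :=
          one_sided_plus x y u hx hy hu
      _ ≤ 4*(1 + y + u^2)*K^2 := by
          apply mul_le_mul_of_nonneg_left hKsq (by positivity)
  -- (4 * z * K^2) ^ e ≤ 4^e * z^e * K^(1+2*max a b)  when 2*e ≤ 1+2*max
  have key : ∀ e z : ℝ, 0 ≤ e → 0 < z → 2*e ≤ 1 + 2*max a b →
      (4*z*K^2) ^ e ≤ 4^e * z^e * K^(1 + 2*max a b) := by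
    intro e z he hz hle
    have h1 : (4*z*K^2) ^ e = 4^e * z^e * (K^2)^e := by
      rw [Real.mul_rpow (by positivity) (by positivity), Real.mul_rpow (by norm_num) hz.le]
    have h2 : (K^2:ℝ)^e = K ^ (2*e) := by
      rw [← Real.rpow_natCast K 2, ← Real.rpow_mul hK0]
      norm_num
    have h3 : K ^ (2*e) ≤ K ^ (1 + 2*max a b) := Real.rpow_le_rpow_of_exponent_le hK1 hle
    rw [h1, h2]
    apply mul_le_mul_of_nonneg_left h3 (by positivity)
  rcases le_total x y with hxy | hxy
  · -- x ≤ y : minus-factor needs the K bound, plus-factor decreases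
    have hA : (1 - x + u^2) ^ (a + 1/2) ≤ 4^(a+1/2) * (1-y+u^2)^(a+1/2) * K^(1+2*max a b) := by
      calc (1 - x + u^2) ^ (a + 1/2) ≤ (4*(1-y+u^2)*K^2) ^ (a+1/2) :=
            Real.rpow_le_rpow pxm.le hm ha2
        _ ≤ 4^(a+1/2) * (1-y+u^2)^(a+1/2) * K^(1+2*max a b) :=
            key _ _ ha2 pym (by have := le_max_left a b; linarith)
    have hB : (1 + x + u^2) ^ (b + 1/2) ≤ (1 + y + u^2) ^ (b + 1/2) :=
      Real.rpow_le_rpow pxp.le (by linarith) hb2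
    calc (1 - x + u^2) ^ (a + 1/2) * (1 + x + u^2) ^ (b + 1/2)
        ≤ (4^(a+1/2) * (1-y+u^2)^(a+1/2) * K^(1+2*max a b)) * ((1 + y + u^2) ^ (b + 1/2)) :=
          mul_le_mul hA hB (by positivity) (by positivity)
      _ = 4^(a+1/2) * ((1-y+u^2)^(a+1/2) * (1+y+u^2)^(b+1/2)) * K^(1+2*max a b) := by ring
      _ ≤ ((4:ℝ)^(a+1/2) + 4^(b+1/2)) * ((1-y+u^2)^(a+1/2) * (1+y+u^2)^(b+1/2))
            * K^(1+2*max a b) := by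
          apply mul_le_mul_of_nonneg_right _ (by positivity)
          apply mul_le_mul_of_nonneg_right _ (by positivity)
          have : (0:ℝ) < 4^(b+1/2) := by positivity
          linarith
  · -- y ≤ x
    have hA : (1 - x + u^2) ^ (a + 1/2) ≤ (1 - y + u^2) ^ (a + 1/2) :=
      Real.rpow_le_rpow pxm.le (by linarith) ha2
    have hB : (1 + x + u^2) ^ (b + 1/2) ≤ 4^(b+1/2) * (1+y+u^2)^(b+1/2) * K^(1+2*max a b) := by
      calc (1 + x + u^2) ^ (b + 1/2) ≤ (4*(1+y+u^2)*K^2) ^ (b+1/2) :=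
            Real.rpow_le_rpow pxp.le hp hb2
        _ ≤ 4^(b+1/2) * (1+y+u^2)^(b+1/2) * K^(1+2*max a b) :=
            key _ _ hb2 pyp (by have := le_max_right a b; linarith)
    calc (1 - x + u^2) ^ (a + 1/2) * (1 + x + u^2) ^ (b + 1/2)
        ≤ (1 - y + u^2) ^ (a + 1/2) * (4^(b+1/2) * (1+y+u^2)^(b+1/2) * K^(1+2*max a b)) :=
          mul_le_mul hA hB (by positivity) (by positivity)
      _ = 4^(b+1/2) * ((1-y+u^2)^(a+1/2) * (1+y+u^2)^(b+1/2)) * K^(1+2*max a b) := by ring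
      _ ≤ ((4:ℝ)^(a+1/2) + 4^(b+1/2)) * ((1-y+u^2)^(a+1/2) * (1+y+u^2)^(b+1/2))
            * K^(1+2*max a b) := by
          apply mul_le_mul_of_nonneg_right _ (by positivity)
          apply mul_le_mul_of_nonneg_right _ (by positivity)
          have : (0:ℝ) < 4^(a+1/2) := by positivity
          linarith

/-- For `W(n;x) = ∏_i (1-x_i+n^{-2})^{α_i+1/2}(1+x_i+n^{-2})^{β_i+1/2}` and
`ρ(x,y) = max_i |arccos x_i - arccos y_i|`, one has
`W(n;x) ≤ c W(n;y) (1+nρ(x,y))^{d+2∑_i max(α_i,β_i)}`. -/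
theorem stmt19 (d : ℕ) (α β : Fin d → ℝ)
    (hα : ∀ i, -(1/2 : ℝ) ≤ α i) (hβ : ∀ i, -(1/2 : ℝ) ≤ β i) :
    ∃ c : ℝ, 0 < c ∧
      ∀ x y : Fin d → ℝ,
        (∀ i, x i ∈ Icc (-1 : ℝ) 1) → (∀ i, y i ∈ Icc (-1 : ℝ) 1) →
        ∀ n : ℕ, 1 ≤ n →
          (∏ i : Fin d, (1 - x i + ((n : ℝ))⁻¹ ^ 2) ^ (α i + 1/2) *
              (1 + x i + ((n : ℝ))⁻¹ ^ 2) ^ (β i + 1/2)) ≤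
          c * (∏ i : Fin d, (1 - y i + ((n : ℝ))⁻¹ ^ 2) ^ (α i + 1/2) *
              (1 + y i + ((n : ℝ))⁻¹ ^ 2) ^ (β i + 1/2)) *
            (1 + (n : ℝ) * ⨆ i, |Real.arccos (x i) - Real.arccos (y i)|) ^
              ((d : ℝ) + 2 * ∑ i : Fin d, max (α i) (β i)) := by
  refine ⟨∏ i : Fin d, ((4:ℝ)^(α i + 1/2) + 4^(β i + 1/2)), ?_, ?_⟩
  · apply Finset.prod_pos; intro i _; positivity
  intro x y hx hy n hn
  have hn0 : (0:ℝ) < (n:ℝ) := by exact_mod_cast Nat.lt_of_lt_of_le Nat.zero_lt_one hn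
  set u : ℝ := ((n:ℝ))⁻¹ with hu_def
  have hu : 0 < u := by positivity
  rcases Nat.eq_zero_or_pos d with hd | hd
  · subst hd
    simp [Real.iSup_of_isEmpty]
  have hne : Nonempty (Fin d) := ⟨⟨0, hd⟩⟩
  set ρ := ⨆ i, |Real.arccos (x i) - Real.arccos (y i)| with hρdef
  have hbdd : BddAbove (Set.range fun i => |Real.arccos (x i) - Real.arccos (y i)|) :=
    (Set.finite_range _).bddAbove
  have hρi : ∀ i, |Real.arccos (x i) - Real.arccos (y i)| ≤ ρ := fun i => le_ciSup hbdd i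
  have hρ0 : 0 ≤ ρ := le_trans (abs_nonneg _) (hρi ⟨0, hd⟩)
  set K : ℝ := 1 + (n:ℝ) * ρ with hKdef
  have hK1 : 1 ≤ K := by nlinarith
  have hK : ∀ i, 1 + |Real.arccos (x i) - Real.arccos (y i)|/u ≤ K := by
    intro i
    have h1 : |Real.arccos (x i) - Real.arccos (y i)|/u
        = (n:ℝ) * |Real.arccos (x i) - Real.arccos (y i)| := by
      rw [hu_def, div_eq_mul_inv, inv_inv, mul_comm]
    rw [h1, hKdef]
    have := hρi i
    nlinarith
  have step : ∀ i : Fin d,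
      (1 - x i + u^2) ^ (α i + 1/2) * (1 + x i + u^2) ^ (β i + 1/2) ≤
      ((4:ℝ)^(α i + 1/2) + 4^(β i + 1/2)) *
        ((1 - y i + u^2) ^ (α i + 1/2) * (1 + y i + u^2) ^ (β i + 1/2)) *
        K ^ (1 + 2 * max (α i) (β i)) := fun i =>
    coord_bound (α i) (β i) (x i) (y i) u K (hα i) (hβ i) (hx i) (hy i) hu hK1 (hK i)
  calc (∏ i : Fin d, (1 - x i + u ^ 2) ^ (α i + 1/2) * (1 + x i + u ^ 2) ^ (β i + 1/2))
      ≤ ∏ i : Fin d, ((4:ℝ)^(α i + 1/2) + 4^(β i + 1/2)) *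
          ((1 - y i + u^2) ^ (α i + 1/2) * (1 + y i + u^2) ^ (β i + 1/2)) *
          K ^ (1 + 2 * max (α i) (β i)) := by
        apply Finset.prod_le_prod
        · intro i _
          have p1 : (0:ℝ) < 1 - x i + u^2 := by nlinarith [(hx i).2]
          have p2 : (0:ℝ) < 1 + x i + u^2 := by nlinarith [(hx i).1]
          positivity
        · intro i _; exact step i
    _ = (∏ i : Fin d, ((4:ℝ)^(α i + 1/2) + 4^(β i + 1/2))) *
          (∏ i : Fin d, (1 - y i + u^2) ^ (α i + 1/2) * (1 + y i + u^2) ^ (β i + 1/2)) *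
          (∏ i : Fin d, K ^ (1 + 2 * max (α i) (β i))) := by
        rw [← Finset.prod_mul_distrib, ← Finset.prod_mul_distrib]
    _ = (∏ i : Fin d, ((4:ℝ)^(α i + 1/2) + 4^(β i + 1/2))) *
          (∏ i : Fin d, (1 - y i + u^2) ^ (α i + 1/2) * (1 + y i + u^2) ^ (β i + 1/2)) *
          K ^ ((d:ℝ) + 2 * ∑ i : Fin d, max (α i) (β i)) := by
        congr 1
        rw [← Real.rpow_sum_of_pos (by linarith : (0:ℝ) < K)]
        congr 1
        rw [Finset.sum_add_distrib, ← Finset.mul_sum]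
        simp [Finset.card_univ]
end
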